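/- arXiv:2501.04117 — 6 statements merged into one kernel-verified Lean document; each statement's English description precedes it below -/
import Mathlib

section
/- Let 1 ≤ p < ∞ and 0 < s < 1, and let N ≥ 1 be an integer. There exists a constant C > 0, depending only on N, s and p, such that for every smooth compactly supported function u : ℝ^N → ℝ one has sup over z ∈ ℝ^N with z ≠ 0 of ∫_{ℝ^N} |u(x+z) − u(x)|^p / |z|^{s p} dx ≤ C ∬_{ℝ^N × ℝ^N} |u(x) − u(y)|^p / |x − y|^{N + s p} dx dy. -/
open MeasureTheory Filter Topology
open Metric
open scoped ENNReal

set_option maxHeartbeats 1000000 in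
/-- Lemma 2.1 / [BLP14, Lemma A.1].
For `1 ≤ p < ∞` and `0 < s < 1` there is a constant `C = C(N,s,p) > 0` such that for
every smooth compactly supported `u : ℝ^N → ℝ` and every `z ≠ 0`,
`∫_{ℝ^N} |u(x+z) - u(x)|^p / |z|^{sp} dx ≤ C ∬_{ℝ^N×ℝ^N} |u(x)-u(y)|^p / |x-y|^{N+sp} dx dy`. -/
theorem stmt_0 (N : ℕ) (hN : 1 ≤ N) (p s : ℝ) (hp : 1 ≤ p) (hs0 : 0 < s) (hs1 : s < 1) :
    ∃ C : ℝ, 0 < C ∧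
      ∀ u : EuclideanSpace ℝ (Fin N) → ℝ, ContDiff ℝ (⊤ : ℕ∞) u → HasCompactSupport u →
        ∀ z : EuclideanSpace ℝ (Fin N), z ≠ 0 →
          (∫⁻ x : EuclideanSpace ℝ (Fin N),
              ENNReal.ofReal (|u (x + z) - u x| ^ p / ‖z‖ ^ (s * p)))
            ≤ ENNReal.ofReal C *
              ∫⁻ w : EuclideanSpace ℝ (Fin N) × EuclideanSpace ℝ (Fin N),
                ENNReal.ofReal (|u w.1 - u w.2| ^ p / ‖w.1 - w.2‖ ^ ((N : ℝ) + s * p)) := by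
  classical
  have hp0 : (0:ℝ) < p := lt_of_lt_of_le one_pos hp
  set e : ℝ := (N : ℝ) + s * p with he
  have he0 : 0 < e := by positivity
  haveI : Nontrivial (EuclideanSpace ℝ (Fin N)) := by
    have : 0 < Module.finrank ℝ (EuclideanSpace ℝ (Fin N)) := by
      rw [finrank_euclideanSpace_fin]; omega
    exact Module.nontrivial_of_finrank_pos this
  set v : ℝ≥0∞ := volume (Metric.ball (0 : EuclideanSpace ℝ (Fin N)) 1) with hv
  have hv0 : v ≠ 0 := (measure_ball_pos volume (0 : EuclideanSpace ℝ (Fin N)) one_pos).ne'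
  have hvtop : v ≠ ∞ := measure_ball_lt_top.ne
  have hvR : 0 < v.toReal := ENNReal.toReal_pos hv0 hvtop
  refine ⟨2 ^ (p + 1 + (N:ℝ)) / v.toReal, by positivity, ?_⟩
  intro u hu hcs z hz
  have hzn : 0 < ‖z‖ := norm_pos_iff.2 hz
  have hcont : Continuous u := hu.continuous
  -- abbreviations
  set G : EuclideanSpace ℝ (Fin N) → EuclideanSpace ℝ (Fin N) → ℝ≥0∞ :=
    fun a b => ENNReal.ofReal (|u a - u b| ^ p / ‖a - b‖ ^ e) with hG
  have hmeas : Measurable fun w : EuclideanSpace ℝ (Fin N) × EuclideanSpace ℝ (Fin N) =>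
      G w.1 w.2 := by
    apply ENNReal.measurable_ofReal.comp
    apply Measurable.div
    · exact ((Real.continuous_rpow_const hp0.le).comp
        (((hcont.comp continuous_fst).sub (hcont.comp continuous_snd)).abs)).measurable
    · exact ((Real.continuous_rpow_const he0.le).comp
        ((continuous_fst.sub continuous_snd).norm)).measurable
  have hslice1 : ∀ a, Measurable fun y : EuclideanSpace ℝ (Fin N) => G a y := by
    intro a
    apply ENNReal.measurable_ofReal.comp
    apply Measurable.div
    · exact ((Real.continuous_rpow_const hp0.le).comp
        ((continuous_const.sub hcont).abs)).measurable
    · exact ((Real.continuous_rpow_const he0.le).comp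
        ((continuous_const.sub continuous_id).norm)).measurable
  have hslice2 : ∀ b, Measurable fun y : EuclideanSpace ℝ (Fin N) => G y b := by
    intro b
    apply ENNReal.measurable_ofReal.comp
    apply Measurable.div
    · exact ((Real.continuous_rpow_const hp0.le).comp
        ((hcont.sub continuous_const).abs)).measurable
    · exact ((Real.continuous_rpow_const he0.le).comp
        ((continuous_id.sub continuous_const).norm)).measurable
  set I : ℝ≥0∞ := ∫⁻ w : EuclideanSpace ℝ (Fin N) × EuclideanSpace ℝ (Fin N), G w.1 w.2 with hI
  -- the radius and ball volume
  set r : ℝ := ‖z‖ / 2 with hr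
  have hr0 : 0 < r := by positivity
  set V : ℝ≥0∞ := volume (Metric.ball (0 : EuclideanSpace ℝ (Fin N)) r) with hV
  have hVval : V = ENNReal.ofReal (r ^ N) * v := by
    rw [hV, Measure.addHaar_ball volume _ hr0.le, finrank_euclideanSpace_fin]
  have hV0 : V ≠ 0 := (measure_ball_pos volume _ hr0).ne'
  have hVtop : V ≠ ∞ := measure_ball_lt_top.ne
  -- Step 1 : pointwise-in-x estimate
  have key : ∀ x : EuclideanSpace ℝ (Fin N),
      ENNReal.ofReal (|u (x + z) - u x| ^ p / ‖z‖ ^ e) * V ≤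
        ENNReal.ofReal (2 ^ p) * ((∫⁻ y, G (x + z) y) + ∫⁻ y, G y x) := by
    intro x
    set c : EuclideanSpace ℝ (Fin N) := x + (2:ℝ)⁻¹ • z with hc
    have hball : volume (Metric.ball c r) = V := by
      rw [hV, Measure.addHaar_ball_center]
    have hptwise : ∀ y ∈ Metric.ball c r,
        ENNReal.ofReal (|u (x + z) - u x| ^ p / ‖z‖ ^ e) ≤
          ENNReal.ofReal (2 ^ p) * (G (x + z) y + G y x) := by
      intro y hy
      have hdy : dist y c < r := mem_ball.1 hy
      have hhalf : ‖(2:ℝ)⁻¹ • z‖ = r := by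
        rw [norm_smul, Real.norm_eq_abs]
        simp [hr, abs_of_nonneg, div_eq_inv_mul]
      have hc1 : dist (x + z) c = r := by
        rw [dist_eq_norm]
        have : x + z - c = (2:ℝ)⁻¹ • z := by
          rw [hc]; module
        rw [this, hhalf]
      have hc2 : dist x c = r := by
        rw [dist_eq_norm]
        have : x - c = -((2:ℝ)⁻¹ • z) := by
          rw [hc]; module
        rw [this, norm_neg, hhalf]
      have hd1lt : ‖x + z - y‖ < ‖z‖ := by
        rw [← dist_eq_norm]
        calc dist (x + z) y ≤ dist (x + z) c + dist c y := dist_triangle _ _ _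
          _ < r + r := by rw [hc1]; gcongr; rwa [dist_comm]
          _ = ‖z‖ := by rw [hr]; ring
      have hd1pos : 0 < ‖x + z - y‖ := by
        rw [← dist_eq_norm]
        have := dist_triangle (x + z) y c
        have h2 := hc1
        nlinarith [dist_nonneg (x := x + z) (y := y)]
      have hd2lt : ‖y - x‖ < ‖z‖ := by
        rw [← dist_eq_norm, dist_comm]
        calc dist x y ≤ dist x c + dist c y := dist_triangle _ _ _
          _ < r + r := by rw [hc2]; gcongr; rwa [dist_comm]
          _ = ‖z‖ := by rw [hr]; ring
      have hd2pos : 0 < ‖y - x‖ := by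
        rw [← dist_eq_norm, dist_comm]
        have := dist_triangle x y c
        nlinarith [dist_nonneg (x := x) (y := y)]
      -- real inequality
      set a : ℝ := |u (x + z) - u y| with ha
      set b : ℝ := |u y - u x| with hb
      have ha0 : 0 ≤ a := abs_nonneg _
      have hb0 : 0 ≤ b := abs_nonneg _
      have habs : |u (x + z) - u x| ≤ a + b := abs_sub_le _ _ _
      have h1 : |u (x + z) - u x| ^ p ≤ (a + b) ^ p :=
        Real.rpow_le_rpow (abs_nonneg _) habs hp0.le
      have h2 : (a + b) ^ p ≤ 2 ^ p * (a ^ p + b ^ p) := by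
        have hm : a + b ≤ 2 * max a b := by
          rcases le_total a b with h | h
          · simp [max_eq_right h]; linarith
          · simp [max_eq_left h]; linarith
        calc (a + b) ^ p ≤ (2 * max a b) ^ p :=
              Real.rpow_le_rpow (by positivity) hm hp0.le
          _ = 2 ^ p * (max a b) ^ p := Real.mul_rpow (by norm_num) (le_max_of_le_left ha0)
          _ ≤ 2 ^ p * (a ^ p + b ^ p) := by
              gcongr
              rcases max_cases a b with ⟨h, _⟩ | ⟨h, _⟩ <;> rw [h]
              · exact le_add_of_nonneg_right (Real.rpow_nonneg hb0 p)
              · exact le_add_of_nonneg_left (Real.rpow_nonneg ha0 p)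
      have h3 : |u (x + z) - u x| ^ p / ‖z‖ ^ e ≤
          2 ^ p * (a ^ p / ‖x + z - y‖ ^ e + b ^ p / ‖y - x‖ ^ e) := by
        have hz1 : ‖x + z - y‖ ^ e ≤ ‖z‖ ^ e :=
          Real.rpow_le_rpow hd1pos.le hd1lt.le he0.le
        have hz2 : ‖y - x‖ ^ e ≤ ‖z‖ ^ e :=
          Real.rpow_le_rpow hd2pos.le hd2lt.le he0.le
        have hz1' : (0:ℝ) < ‖x + z - y‖ ^ e := Real.rpow_pos_of_pos hd1pos e
        have hz2' : (0:ℝ) < ‖y - x‖ ^ e := Real.rpow_pos_of_pos hd2pos e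
        calc |u (x + z) - u x| ^ p / ‖z‖ ^ e ≤ (2 ^ p * (a ^ p + b ^ p)) / ‖z‖ ^ e := by
              gcongr
              exact h1.trans h2
          _ = 2 ^ p * (a ^ p / ‖z‖ ^ e + b ^ p / ‖z‖ ^ e) := by ring
          _ ≤ 2 ^ p * (a ^ p / ‖x + z - y‖ ^ e + b ^ p / ‖y - x‖ ^ e) := by
              gcongr 2 ^ p * (?_ + ?_)
              · exact div_le_div_of_nonneg_left (Real.rpow_nonneg ha0 p) hz1' hz1
              · exact div_le_div_of_nonneg_left (Real.rpow_nonneg hb0 p) hz2' hz2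
      calc ENNReal.ofReal (|u (x + z) - u x| ^ p / ‖z‖ ^ e)
          ≤ ENNReal.ofReal (2 ^ p * (a ^ p / ‖x + z - y‖ ^ e + b ^ p / ‖y - x‖ ^ e)) :=
            ENNReal.ofReal_le_ofReal h3
        _ = ENNReal.ofReal (2 ^ p) * (G (x + z) y + G y x) := by
            rw [ENNReal.ofReal_mul (by positivity),
              ENNReal.ofReal_add (by positivity) (by positivity)]
    have hmg : Measurable fun y => ENNReal.ofReal (2 ^ p) * (G (x + z) y + G y x) :=
      ((hslice1 (x + z)).add (hslice2 x)).const_mul _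
    calc ENNReal.ofReal (|u (x + z) - u x| ^ p / ‖z‖ ^ e) * V
        = ∫⁻ _ in Metric.ball c r, ENNReal.ofReal (|u (x + z) - u x| ^ p / ‖z‖ ^ e) := by
          rw [setLIntegral_const, hball]
      _ ≤ ∫⁻ y in Metric.ball c r, ENNReal.ofReal (2 ^ p) * (G (x + z) y + G y x) :=
          setLIntegral_mono hmg hptwise
      _ ≤ ∫⁻ y, ENNReal.ofReal (2 ^ p) * (G (x + z) y + G y x) :=
          setLIntegral_le_lintegral _ _
      _ = ENNReal.ofReal (2 ^ p) * ((∫⁻ y, G (x + z) y) + ∫⁻ y, G y x) := by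
          rw [lintegral_const_mul' _ _ ENNReal.ofReal_ne_top,
            lintegral_add_left (hslice1 (x + z))]
  -- measurability of the two slice integrals
  have hm1 : Measurable fun x : EuclideanSpace ℝ (Fin N) => ∫⁻ y, G (x + z) y := by
    apply Measurable.lintegral_prod_right'
      (f := fun w : EuclideanSpace ℝ (Fin N) × EuclideanSpace ℝ (Fin N) => G (w.1 + z) w.2)
    apply ENNReal.measurable_ofReal.comp
    apply Measurable.div
    · exact ((Real.continuous_rpow_const hp0.le).comp
        (((hcont.comp (continuous_fst.add continuous_const)).sub
          (hcont.comp continuous_snd)).abs)).measurable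
    · exact ((Real.continuous_rpow_const he0.le).comp
        (((continuous_fst.add continuous_const).sub continuous_snd).norm)).measurable
  have hm2 : Measurable fun x : EuclideanSpace ℝ (Fin N) => ∫⁻ y, G y x := by
    apply Measurable.lintegral_prod_right'
      (f := fun w : EuclideanSpace ℝ (Fin N) × EuclideanSpace ℝ (Fin N) => G w.2 w.1)
    apply ENNReal.measurable_ofReal.comp
    apply Measurable.div
    · exact ((Real.continuous_rpow_const hp0.le).comp
        (((hcont.comp continuous_snd).sub (hcont.comp continuous_fst)).abs)).measurable
    · exact ((Real.continuous_rpow_const he0.le).comp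
        ((continuous_snd.sub continuous_fst).norm)).measurable
  -- Step 2 : integrate the key estimate
  have hstep2 : (∫⁻ x, ENNReal.ofReal (|u (x + z) - u x| ^ p / ‖z‖ ^ e)) * V ≤
      ENNReal.ofReal (2 ^ p) * (I + I) := by
    have hJ1 : (∫⁻ x, ∫⁻ y, G (x + z) y) = I := by
      have := lintegral_add_right_eq_self (μ := (volume : Measure (EuclideanSpace ℝ (Fin N))))
        (fun w => ∫⁻ y, G w y) z
      rw [this, hI, Measure.volume_eq_prod, ← lintegral_lintegral hmeas.aemeasurable]
    have hJ2 : (∫⁻ x, ∫⁻ y, G y x) = I := by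
      have hswap : ∀ x, (∫⁻ y, G y x) = ∫⁻ y, G x y := by
        intro x
        refine lintegral_congr fun y => ?_
        rw [hG]
        simp only [abs_sub_comm (u y), norm_sub_rev y]
      calc (∫⁻ x, ∫⁻ y, G y x) = ∫⁻ x, ∫⁻ y, G x y := lintegral_congr hswap
        _ = I := by
          rw [hI, Measure.volume_eq_prod, ← lintegral_lintegral hmeas.aemeasurable]
    calc (∫⁻ x, ENNReal.ofReal (|u (x + z) - u x| ^ p / ‖z‖ ^ e)) * V
        = ∫⁻ x, ENNReal.ofReal (|u (x + z) - u x| ^ p / ‖z‖ ^ e) * V :=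
          (lintegral_mul_const' V _ hVtop).symm
      _ ≤ ∫⁻ x, ENNReal.ofReal (2 ^ p) * ((∫⁻ y, G (x + z) y) + ∫⁻ y, G y x) :=
          lintegral_mono key
      _ = ENNReal.ofReal (2 ^ p) * ((∫⁻ x, ∫⁻ y, G (x + z) y) + ∫⁻ x, ∫⁻ y, G y x) := by
          rw [lintegral_const_mul' _ _ ENNReal.ofReal_ne_top, lintegral_add_left hm1]
      _ = ENNReal.ofReal (2 ^ p) * (I + I) := by rw [hJ1, hJ2]
  -- Step 3 : rewrite the LHS
  have hLHS : (∫⁻ x, ENNReal.ofReal (|u (x + z) - u x| ^ p / ‖z‖ ^ (s * p))) =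
      ENNReal.ofReal (‖z‖ ^ (N:ℝ)) *
        ∫⁻ x, ENNReal.ofReal (|u (x + z) - u x| ^ p / ‖z‖ ^ e) := by
    rw [← lintegral_const_mul' _ _ ENNReal.ofReal_ne_top]
    congr 1
    ext x
    rw [← ENNReal.ofReal_mul (Real.rpow_nonneg (norm_nonneg z) _)]
    congr 1
    rw [he, Real.rpow_add hzn]
    field_simp
  -- Step 4 : combine
  rw [hLHS]
  have hmain : ENNReal.ofReal (‖z‖ ^ (N:ℝ)) *
      (∫⁻ x, ENNReal.ofReal (|u (x + z) - u x| ^ p / ‖z‖ ^ e)) * V ≤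
      (ENNReal.ofReal (2 ^ (p + 1 + (N:ℝ)) / v.toReal) * I) * V := by
    calc ENNReal.ofReal (‖z‖ ^ (N:ℝ)) *
        (∫⁻ x, ENNReal.ofReal (|u (x + z) - u x| ^ p / ‖z‖ ^ e)) * V
        = ENNReal.ofReal (‖z‖ ^ (N:ℝ)) *
          ((∫⁻ x, ENNReal.ofReal (|u (x + z) - u x| ^ p / ‖z‖ ^ e)) * V) := by ring
      _ ≤ ENNReal.ofReal (‖z‖ ^ (N:ℝ)) * (ENNReal.ofReal (2 ^ p) * (I + I)) := by gcongr
      _ = ENNReal.ofReal (‖z‖ ^ (N:ℝ) * 2 ^ p * 2) * I := by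
          rw [ENNReal.ofReal_mul (by positivity : (0:ℝ) ≤ ‖z‖ ^ (N:ℝ) * 2 ^ p),
            ENNReal.ofReal_mul (by positivity : (0:ℝ) ≤ ‖z‖ ^ (N:ℝ)), ENNReal.ofReal_ofNat]
          ring
      _ ≤ (ENNReal.ofReal (2 ^ (p + 1 + (N:ℝ)) / v.toReal) * I) * V := by
          have h2 : (2:ℝ) ^ (p + 1 + (N:ℝ)) = 2 ^ p * 2 * 2 ^ (N:ℕ) := by
            rw [Real.rpow_add two_pos, Real.rpow_add two_pos, Real.rpow_one,
              Real.rpow_natCast]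
          have hle : ‖z‖ ^ (N:ℝ) * 2 ^ p * 2 ≤
              2 ^ (p + 1 + (N:ℝ)) / v.toReal * v.toReal * (r ^ N) := by
            rw [div_mul_cancel₀ _ hvR.ne', h2, Real.rpow_natCast, hr, div_pow]
            apply le_of_eq
            field_simp
          calc ENNReal.ofReal (‖z‖ ^ (N:ℝ) * 2 ^ p * 2) * I
              ≤ ENNReal.ofReal (2 ^ (p + 1 + (N:ℝ)) / v.toReal * v.toReal * (r ^ N)) * I :=
                mul_le_mul_left (ENNReal.ofReal_le_ofReal hle) I
            _ = (ENNReal.ofReal (2 ^ (p + 1 + (N:ℝ)) / v.toReal) * I) * V := by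
                rw [ENNReal.ofReal_mul
                    (by positivity : (0:ℝ) ≤ 2 ^ (p + 1 + (N:ℝ)) / v.toReal * v.toReal),
                  ENNReal.ofReal_mul
                    (by positivity : (0:ℝ) ≤ 2 ^ (p + 1 + (N:ℝ)) / v.toReal),
                  ENNReal.ofReal_toReal hvtop, hVval]
                ring
  exact (ENNReal.mul_le_mul_iff_left hV0 hVtop).mp hmain
end

section
/- Let s₂ ∈ (0,1) and q ∈ (1,∞). Then: (i) no negative real number is an eigenvalue of the fractional q-Neumann problem; (ii) λ = 0 is an eigenvalue of the fractional q-Neumann problem, and its eigenfunctions are exactly the functions that are almost everywhere equal to a nonzero constant on ℝ^N; (iii) if moreover the embedding X_{s₂,q} ↪ L^q(Ω) is compact, then 0 is an isolated eigenvalue: there exists δ > 0 such that no λ ∈ (0, δ) is an eigenvalue of the fractional q-Neumann problem. -/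
open MeasureTheory Filter Topology
open scoped ENNReal

noncomputable section

/-- `ℝ^N` with the Euclidean norm. -/
abbrev Euc (N : ℕ) : Type := EuclideanSpace ℝ (Fin N)

/-- The region `Q = (ℝ^N × ℝ^N) \ (Ωᶜ × Ωᶜ)`. -/
def Qset {N : ℕ} (Ω : Set (Euc N)) : Set (Euc N × Euc N) :=
  {z | z.1 ∈ Ω ∨ z.2 ∈ Ω}

/-- The Gagliardo energy `[u]_{s,r}^r = ∬_Q |u(x)-u(y)|^r / |x-y|^{N+sr} dx dy`,
as an extended nonnegative real. -/
def gagliardo {N : ℕ} (Ω : Set (Euc N)) (s r : ℝ) (u : Euc N → ℝ) : ℝ≥0∞ :=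
  ∫⁻ z in Qset Ω, ENNReal.ofReal (|u z.1 - u z.2| ^ r / ‖z.1 - z.2‖ ^ ((N : ℝ) + s * r))

/-- Membership in the fractional Sobolev space `X_{s,r}`. -/
def memX {N : ℕ} (Ω : Set (Euc N)) (s r : ℝ) (u : Euc N → ℝ) : Prop :=
  Measurable u ∧ (∫⁻ x in Ω, ENNReal.ofReal (|u x| ^ r)) + gagliardo Ω s r u < ⊤

/-- `[u]_{s,r}^r` as a real number. -/
def semiPow {N : ℕ} (Ω : Set (Euc N)) (s r : ℝ) (u : Euc N → ℝ) : ℝ :=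
  (gagliardo Ω s r u).toReal

/-- The Gagliardo seminorm `[u]_{s,r}`. -/
def gNorm {N : ℕ} (Ω : Set (Euc N)) (s r : ℝ) (u : Euc N → ℝ) : ℝ :=
  semiPow Ω s r u ^ (1 / r)

/-- The norm `‖u‖_{s,r} = ( ∫_Ω |u|^r + [u]_{s,r}^r )^{1/r}`. -/
def normX {N : ℕ} (Ω : Set (Euc N)) (s r : ℝ) (u : Euc N → ℝ) : ℝ :=
  ((∫ x in Ω, |u x| ^ r) + semiPow Ω s r u) ^ (1 / r)

/-- The form `ℰ_{s,r}(u,v)`. -/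
def energyForm {N : ℕ} (Ω : Set (Euc N)) (s r : ℝ) (u v : Euc N → ℝ) : ℝ :=
  ∫ z in Qset Ω,
    (|u z.1 - u z.2| ^ (r - 2) * (u z.1 - u z.2) * (v z.1 - v z.2)) /
      ‖z.1 - z.2‖ ^ ((N : ℝ) + s * r)

/-- `λ₁(s₂,q) = inf { [u]_{s₂,q}^q : u ∈ 𝒞_{s₂,q}, ∫_Ω |u|^q = 1 }`. -/
def lam1 {N : ℕ} (Ω : Set (Euc N)) (s₂ q : ℝ) : ℝ :=
  sInf {t : ℝ | ∃ u : Euc N → ℝ, memX Ω s₂ q u ∧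
    (∫ x in Ω, |u x| ^ (q - 2) * u x) = 0 ∧ (∫ x in Ω, |u x| ^ q) = 1 ∧
    t = semiPow Ω s₂ q u}

/-- `lam` is an eigenvalue of the fractional `q`-Neumann problem. -/
def IsEigenQ {N : ℕ} (Ω : Set (Euc N)) (s₂ q lam : ℝ) : Prop :=
  ∃ u : Euc N → ℝ, memX Ω s₂ q u ∧ ¬ (u =ᵐ[volume] fun _ => (0 : ℝ)) ∧
    ∀ v : Euc N → ℝ, memX Ω s₂ q v →
      energyForm Ω s₂ q u v = lam * ∫ x in Ω, |u x| ^ (q - 2) * u x * v x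

/-- `lam` is an eigenvalue of problem (1.1). -/
def IsEigen11 {N : ℕ} (Ω : Set (Euc N)) (s₁ s₂ p q lam : ℝ) : Prop :=
  ∃ u : Euc N → ℝ, memX Ω s₁ p u ∧ memX Ω s₂ q u ∧ ¬ (u =ᵐ[volume] fun _ => (0 : ℝ)) ∧
    ∀ v : Euc N → ℝ, memX Ω s₁ p v → memX Ω s₂ q v →
      energyForm Ω s₁ p u v + energyForm Ω s₂ q u v
        = lam * ∫ x in Ω, |u x| ^ (q - 2) * u x * v x

/-- Compactness of the embedding `X_{s,r} ↪ L^r(Ω)`. -/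
def CompactEmbed {N : ℕ} (Ω : Set (Euc N)) (s r : ℝ) : Prop :=
  ∀ u : ℕ → Euc N → ℝ, (∀ n, memX Ω s r (u n)) →
    (∃ B : ℝ, ∀ n, normX Ω s r (u n) ≤ B) →
    ∃ φ : ℕ → ℕ, StrictMono φ ∧ ∃ w : Euc N → ℝ,
      Tendsto (fun n => ∫⁻ x in Ω, ENNReal.ofReal (|u (φ n) x - w x| ^ r))
        atTop (nhds 0)

/-- The energy functional `F_λ`. -/
def Ffun {N : ℕ} (Ω : Set (Euc N)) (s₁ s₂ p q lam : ℝ) (u : Euc N → ℝ) : ℝ :=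
  (1 / p) * semiPow Ω s₁ p u + (1 / q) * semiPow Ω s₂ q u - (lam / q) * ∫ x in Ω, |u x| ^ q

/-- The Nehari set `N_λ`. -/
def Nehari {N : ℕ} (Ω : Set (Euc N)) (s₁ s₂ p q lam : ℝ) : Set (Euc N → ℝ) :=
  {u | memX Ω s₂ q u ∧ (∫ x in Ω, |u x| ^ (q - 2) * u x) = 0 ∧
    ¬ (u =ᵐ[volume] fun _ => (0 : ℝ)) ∧
    semiPow Ω s₁ p u + semiPow Ω s₂ q u = lam * ∫ x in Ω, |u x| ^ q}

lemma tangent_ineq {q : ℝ} (hq : 1 < q) (a c : ℝ) :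
    |a| ^ q ≤ |a - c| ^ q + q * c * (|a| ^ (q - 2) * a) := by
  have h0 : (0:ℝ) < q := by linarith
  rcases eq_or_ne a 0 with rfl | ha
  · simp only [abs_zero, mul_zero, zero_sub, abs_neg]
    rw [Real.zero_rpow h0.ne']
    have : (0:ℝ) ≤ |c| ^ q := Real.rpow_nonneg (abs_nonneg c) q
    linarith
  · have hA : 0 < |a| := abs_pos.mpr ha
    set b := a - c with hbdef
    have hc : c = a - b := by rw [hbdef]; ring
    have h2 : |a| ^ (q-2) * (a*a) = |a| ^ q := by
      rw [← abs_mul_abs_self a]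
      rw [show |a| ^ q = |a| ^ ((q-2) + 1 + 1) by ring_nf,
        Real.rpow_add hA, Real.rpow_add hA, Real.rpow_one]
      ring
    have h3 : |a| ^ (q-2) * |a| = |a| ^ (q-1) := by
      rw [show q - 1 = (q-2) + 1 by ring, Real.rpow_add_one hA.ne']
    have hpq : (Real.conjExponent q).HolderConjugate q :=
      (Real.HolderConjugate.conjExponent hq).symm
    have hy := Real.young_inequality_of_nonneg
      (Real.rpow_nonneg (abs_nonneg a) (q-1)) (abs_nonneg b) hpq
    have hq1 : (0:ℝ) < q - 1 := by linarith
    have hp : Real.conjExponent q = q/(q-1) := rfl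
    have e2 : (|a| ^ (q-1)) ^ (Real.conjExponent q) = |a| ^ q := by
      rw [← Real.rpow_mul (abs_nonneg a), hp]
      congr 1
      field_simp
    rw [e2, hp] at hy
    have e3 : |a| ^ q / (q/(q-1)) = (q-1)/q * |a| ^ q := by
      field_simp
    rw [e3] at hy
    -- hy : |a|^(q-1) * |b| ≤ (q-1)/q * |a|^q + |b|^q / q
    have hy2 : q * (|a| ^ (q-1) * |b|) ≤ (q-1) * |a| ^ q + |b| ^ q := by
      have hmul := mul_le_mul_of_nonneg_left hy h0.le
      have hq0 : q ≠ 0 := h0.ne'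
      have : q * ((q-1)/q * |a| ^ q + |b| ^ q / q) = (q-1) * |a| ^ q + |b| ^ q := by
        field_simp
      linarith [hmul, this.le, this.ge]
    have hab : |a| ^ (q-2) * (a*b) ≤ |a| ^ (q-1) * |b| := by
      have h1 : a * b ≤ |a| * |b| := (le_abs_self (a*b)).trans (abs_mul a b).le
      calc |a| ^ (q-2) * (a*b) ≤ |a| ^ (q-2) * (|a| * |b|) :=
            mul_le_mul_of_nonneg_left h1 (Real.rpow_nonneg (abs_nonneg a) _)
        _ = (|a| ^ (q-2) * |a|) * |b| := by ring
        _ = |a| ^ (q-1) * |b| := by rw [h3]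
    have hexp : q * c * (|a| ^ (q-2) * a)
        = q * (|a| ^ (q-2) * (a*a)) - q * (|a| ^ (q-2) * (a*b)) := by
      rw [hc]; ring
    have hab2 : q * (|a| ^ (q-2) * (a*b)) ≤ q * (|a| ^ (q-1) * |b|) :=
      mul_le_mul_of_nonneg_left hab h0.le
    rw [hexp, h2]
    linarith
lemma rpow_id_self {q : ℝ} (hq : 1 < q) (a : ℝ) : |a| ^ (q - 2) * a * a = |a| ^ q := by
  rcases eq_or_ne a 0 with rfl | ha
  · rw [mul_zero, abs_zero, Real.zero_rpow (by linarith : q ≠ 0)]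
  · have hA : 0 < |a| := abs_pos.mpr ha
    rw [mul_assoc, ← abs_mul_abs_self a,
      show |a| ^ q = |a| ^ ((q-2) + 1 + 1) by ring_nf,
      Real.rpow_add hA, Real.rpow_add hA, Real.rpow_one]
    ring

lemma abs_qm1_le {q : ℝ} (hq : 1 < q) (t : ℝ) : |(|t| ^ (q - 2) * t)| ≤ 1 + |t| ^ q := by
  rcases eq_or_ne t 0 with rfl | ht
  · have h0 : (0:ℝ) ≤ (0:ℝ) ^ q := Real.rpow_nonneg le_rfl q
    simp only [mul_zero, abs_zero]
    linarith
  · have hA : 0 < |t| := abs_pos.mpr ht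
    have h1 : |(|t| ^ (q-2) * t)| = |t| ^ (q-1) := by
      rw [abs_mul, abs_of_nonneg (Real.rpow_nonneg (abs_nonneg t) _),
        show q - 1 = (q-2) + 1 by ring, Real.rpow_add_one hA.ne']
    rw [h1]
    rcases le_total |t| 1 with h | h
    · have : |t| ^ (q-1) ≤ 1 := Real.rpow_le_one (abs_nonneg t) h (by linarith)
      have : (0:ℝ) ≤ |t| ^ q := Real.rpow_nonneg (abs_nonneg t) q
      linarith [Real.rpow_le_one (abs_nonneg t) h (by linarith : (0:ℝ) ≤ q - 1)]
    · have h2 : |t| ^ (q-1) ≤ |t| ^ q :=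
        Real.rpow_le_rpow_of_exponent_le h (by linarith)
      have : (0:ℝ) ≤ 1 := zero_le_one
      linarith

lemma meas_g {q : ℝ} : Measurable fun t : ℝ => |t| ^ (q - 2) * t := by
  apply measurable_of_continuousOn_compl_singleton 0
  exact ((continuous_abs.continuousOn.rpow_const
    (fun x hx => Or.inl (abs_ne_zero.mpr hx))).mul continuousOn_id)
-- chunk 2 lemmas (to be appended after defs)
section Aux
variable {N : ℕ} {Ω : Set (Euc N)} {s₂ q : ℝ}

lemma qset_eq : Qset Ω = (Ω ×ˢ (Set.univ : Set (Euc N))) ∪ ((Set.univ : Set (Euc N)) ×ˢ Ω) := by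
  ext z; simp [Qset, Set.mem_prod]

lemma measurableSet_Qset (hΩo : IsOpen Ω) : MeasurableSet (Qset Ω) := by
  rw [qset_eq]
  exact (hΩo.measurableSet.prod MeasurableSet.univ).union
    (MeasurableSet.univ.prod hΩo.measurableSet)

lemma meas_kernel (hE : 0 ≤ (N:ℝ) + s₂ * q) :
    Measurable fun z : Euc N × Euc N => ‖z.1 - z.2‖ ^ ((N:ℝ) + s₂ * q) :=
  ((Real.continuous_rpow_const hE).comp
    ((continuous_fst.sub continuous_snd).norm)).measurable

lemma meas_num {u : Euc N → ℝ} (hu : Measurable u) (hq : 0 ≤ q) :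
    Measurable fun z : Euc N × Euc N => |u z.1 - u z.2| ^ q :=
  (Real.continuous_rpow_const hq).measurable.comp
    ((hu.comp measurable_fst).sub (hu.comp measurable_snd)).abs

lemma meas_F {u : Euc N → ℝ} (hu : Measurable u) (hq : 0 ≤ q)
    (hE : 0 ≤ (N:ℝ) + s₂ * q) :
    Measurable fun z : Euc N × Euc N =>
      ENNReal.ofReal (|u z.1 - u z.2| ^ q / ‖z.1 - z.2‖ ^ ((N:ℝ) + s₂ * q)) :=
  ((meas_num hu hq).div (meas_kernel hE)).ennreal_ofReal

lemma energyForm_self (hq : 1 < q) (hE : 0 ≤ (N:ℝ) + s₂ * q) {u : Euc N → ℝ}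
    (hu : Measurable u) : energyForm Ω s₂ q u u = semiPow Ω s₂ q u := by
  have hcong : ∀ z : Euc N × Euc N,
      (|u z.1 - u z.2| ^ (q - 2) * (u z.1 - u z.2) * (u z.1 - u z.2)) /
        ‖z.1 - z.2‖ ^ ((N:ℝ) + s₂ * q)
      = |u z.1 - u z.2| ^ q / ‖z.1 - z.2‖ ^ ((N:ℝ) + s₂ * q) := by
    intro z; rw [rpow_id_self hq]
  rw [energyForm, semiPow, gagliardo]
  rw [integral_congr_ae (Filter.Eventually.of_forall hcong)]
  rw [integral_eq_lintegral_of_nonneg_ae]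
  · exact Filter.Eventually.of_forall fun z => div_nonneg
      (Real.rpow_nonneg (abs_nonneg _) q) (Real.rpow_nonneg (norm_nonneg _) _)
  · exact ((meas_num hu (by linarith)).div (meas_kernel hE)).aestronglyMeasurable

lemma gagliardo_const (hq : 1 < q) (C : ℝ) :
    gagliardo Ω s₂ q (fun _ => C) = 0 := by
  simp [gagliardo, Real.zero_rpow (by linarith : q ≠ 0)]

lemma memX_const (hq : 1 < q) (hΩb : Bornology.IsBounded Ω) (C : ℝ) :
    memX Ω s₂ q (fun _ => C) := by
  refine ⟨measurable_const, ?_⟩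
  rw [gagliardo_const hq, add_zero, lintegral_const, Measure.restrict_apply_univ]
  exact ENNReal.mul_lt_top ENNReal.ofReal_lt_top hΩb.measure_lt_top

lemma energyForm_const_right (u : Euc N → ℝ) (C : ℝ) :
    energyForm Ω s₂ q u (fun _ => C) = 0 := by
  simp [energyForm]

lemma energyForm_const_left (v : Euc N → ℝ) (C : ℝ) :
    energyForm Ω s₂ q (fun _ => C) v = 0 := by
  simp [energyForm]

end Aux
section Aux2
variable {N : ℕ} {Ω : Set (Euc N)} {s₂ q : ℝ}

lemma integrableOn_of_lintegral {g : Euc N → ℝ} (hg : Measurable g) (h0 : ∀ x, 0 ≤ g x)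
    (hfin : (∫⁻ x in Ω, ENNReal.ofReal (g x)) ≠ ⊤) : IntegrableOn g Ω := by
  refine ⟨hg.aestronglyMeasurable, ?_⟩
  rw [hasFiniteIntegral_iff_ofReal (Filter.Eventually.of_forall h0)]
  exact hfin.lt_top

lemma exists_const_of_gagliardo_zero (hN : 2 ≤ N) (hΩo : IsOpen Ω)
    (hΩpos : volume Ω ≠ 0) (hq : 1 < q) (hE : 0 < (N:ℝ) + s₂ * q)
    {u : Euc N → ℝ} (hu : Measurable u) (h0 : gagliardo Ω s₂ q u = 0) :
    ∃ c : ℝ, u =ᵐ[volume] fun _ => c := by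
  have hNE : Nonempty (Fin N) := ⟨⟨0, by omega⟩⟩
  have hf := meas_F hu (by linarith : (0:ℝ) ≤ q) hE.le (s₂ := s₂)
  have h1 : (fun z : Euc N × Euc N =>
      ENNReal.ofReal (|u z.1 - u z.2| ^ q / ‖z.1 - z.2‖ ^ ((N:ℝ) + s₂ * q)))
        =ᵐ[(volume : Measure (Euc N × Euc N)).restrict (Qset Ω)] 0 :=
    (lintegral_eq_zero_iff hf).mp h0
  have hsub : Ω ×ˢ (Set.univ : Set (Euc N)) ⊆ Qset Ω := fun z hz => Or.inl hz.1
  have h2 := ae_restrict_of_ae_restrict_of_subset hsub h1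
  have hprodeq : (volume : Measure (Euc N × Euc N)).restrict (Ω ×ˢ Set.univ)
      = ((volume : Measure (Euc N)).restrict Ω).prod volume := by
    rw [MeasureTheory.Measure.volume_eq_prod, ← Measure.prod_restrict, Measure.restrict_univ]
  rw [hprodeq] at h2
  have hdiagmeas : MeasurableSet {z : Euc N × Euc N | z.1 = z.2} :=
    (isClosed_eq continuous_fst continuous_snd).measurableSet
  have hdiag : (((volume : Measure (Euc N)).restrict Ω).prod volume)
      {z : Euc N × Euc N | z.1 = z.2} = 0 := by
    rw [Measure.prod_apply hdiagmeas]
    have hsl : ∀ x : Euc N,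
        (volume : Measure (Euc N)) (Prod.mk x ⁻¹' {z : Euc N × Euc N | z.1 = z.2}) = 0 := by
      intro x
      have : (Prod.mk x ⁻¹' {z : Euc N × Euc N | z.1 = z.2}) = {x} := by
        ext y; simp [eq_comm]
      rw [this]; exact measure_singleton x
    simp [hsl]
  have hne : ∀ᵐ z ∂(((volume : Measure (Euc N)).restrict Ω).prod volume),
      ¬ (z.1 = z.2) := by
    rw [ae_iff]; simpa using hdiag
  have h3 : ∀ᵐ z ∂(((volume : Measure (Euc N)).restrict Ω).prod volume),
      u z.1 = u z.2 := by
    filter_upwards [h2, hne] with z hz hzne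
    have hden : 0 < ‖z.1 - z.2‖ ^ ((N:ℝ) + s₂ * q) :=
      Real.rpow_pos_of_pos (norm_pos_iff.mpr (sub_ne_zero.mpr hzne)) _
    have hle : |u z.1 - u z.2| ^ q / ‖z.1 - z.2‖ ^ ((N:ℝ) + s₂ * q) ≤ 0 :=
      ENNReal.ofReal_eq_zero.mp hz
    have hnum : |u z.1 - u z.2| ^ q ≤ 0 := by
      by_contra h
      push_neg at h
      exact absurd (div_pos h hden) (not_lt.mpr hle)
    have habs : |u z.1 - u z.2| = 0 := by
      have hge : 0 ≤ |u z.1 - u z.2| ^ q := Real.rpow_nonneg (abs_nonneg _) q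
      have heq : |u z.1 - u z.2| ^ q = 0 := le_antisymm hnum hge
      rcases (Real.rpow_eq_zero_iff_of_nonneg (abs_nonneg _)).mp heq with ⟨h', _⟩
      exact h'
    have := abs_eq_zero.mp habs
    linarith [sub_eq_zero.mp this]
  have h4 := Measure.ae_ae_of_ae_prod h3
  have hnebot : (ae ((volume : Measure (Euc N)).restrict Ω)).NeBot :=
    ae_neBot.mpr (by rwa [Ne, Measure.restrict_eq_zero])
  obtain ⟨x₀, hx₀⟩ := h4.exists
  exact ⟨u x₀, hx₀.mono fun y hy => hy.symm⟩

lemma energyForm_of_aeconst {u : Euc N → ℝ} {c : ℝ}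
    (hc : u =ᵐ[volume] fun _ => c) (v : Euc N → ℝ) :
    energyForm Ω s₂ q u v = 0 := by
  have hnull : (volume : Measure (Euc N)) {x : Euc N | ¬ u x = c} = 0 := by
    exact hc
  obtain ⟨A, hAsub, hAmeas, hA0⟩ := exists_measurable_superset_of_null hnull
  have hbad : (volume : Measure (Euc N × Euc N))
      {z : Euc N × Euc N | ¬ (u z.1 = c ∧ u z.2 = c)} = 0 := by
    have hsub2 : {z : Euc N × Euc N | ¬ (u z.1 = c ∧ u z.2 = c)}
        ⊆ (A ×ˢ (Set.univ : Set (Euc N))) ∪ ((Set.univ : Set (Euc N)) ×ˢ A) := by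
      intro z hz
      simp only [Set.mem_setOf_eq, not_and_or] at hz
      rcases hz with h | h
      · exact Or.inl ⟨hAsub h, Set.mem_univ _⟩
      · exact Or.inr ⟨Set.mem_univ _, hAsub h⟩
    have hun : (volume : Measure (Euc N × Euc N))
        ((A ×ˢ (Set.univ : Set (Euc N))) ∪ ((Set.univ : Set (Euc N)) ×ˢ A)) = 0 := by
      apply measure_union_null
      · rw [MeasureTheory.Measure.volume_eq_prod, Measure.prod_prod, hA0, zero_mul]
      · rw [MeasureTheory.Measure.volume_eq_prod, Measure.prod_prod, hA0, mul_zero]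
    exact measure_mono_null hsub2 hun
  have hae : ∀ᵐ z ∂(volume : Measure (Euc N × Euc N)).restrict (Qset Ω),
      u z.1 = c ∧ u z.2 = c := by
    apply ae_restrict_of_ae
    rw [ae_iff]
    exact hbad
  rw [energyForm]
  rw [show (0:ℝ) = ∫ z in Qset Ω, (0:ℝ) from (integral_zero _ _).symm]
  apply integral_congr_ae
  filter_upwards [hae] with z hz
  rw [hz.1, hz.2]
  simp

end Aux2
section Aux3
variable {N : ℕ} {Ω : Set (Euc N)} {s₂ q : ℝ}

lemma key_lower (hq : 1 < q) (hΩb : Bornology.IsBounded Ω) {u : Euc N → ℝ}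
    (hu : Measurable u)
    (hfin : (∫⁻ x in Ω, ENNReal.ofReal (|u x| ^ q)) ≠ ⊤)
    (horth : ∫ x in Ω, |u x| ^ (q - 2) * u x = 0) (c : ℝ) :
    (∫⁻ x in Ω, ENNReal.ofReal (|u x| ^ q)) ≤ ∫⁻ x in Ω, ENNReal.ofReal (|u x - c| ^ q) := by
  by_cases hJ : (∫⁻ x in Ω, ENNReal.ofReal (|u x - c| ^ q)) = ⊤
  · rw [hJ]; exact le_top
  · have hq0 : (0:ℝ) ≤ q := by linarith
    have hmu : Measurable fun x : Euc N => |u x| ^ q :=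
      (Real.continuous_rpow_const hq0).measurable.comp hu.abs
    have hmuc : Measurable fun x : Euc N => |u x - c| ^ q :=
      (Real.continuous_rpow_const hq0).measurable.comp (hu.sub measurable_const).abs
    have hIuq : IntegrableOn (fun x => |u x| ^ q) Ω :=
      integrableOn_of_lintegral hmu (fun x => Real.rpow_nonneg (abs_nonneg _) q) hfin
    have hIc : IntegrableOn (fun x => |u x - c| ^ q) Ω :=
      integrableOn_of_lintegral hmuc (fun x => Real.rpow_nonneg (abs_nonneg _) q) hJ
    have hg : Measurable fun x : Euc N => |u x| ^ (q - 2) * u x := meas_g.comp hu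
    have hIg : IntegrableOn (fun x => |u x| ^ (q - 2) * u x) Ω := by
      apply Integrable.mono' (g := fun x => 1 + |u x| ^ q)
        ((integrableOn_const hΩb.measure_lt_top.ne).add hIuq)
        hg.aestronglyMeasurable
      exact Filter.Eventually.of_forall fun x => abs_qm1_le hq (u x)
    have hpt : ∀ x : Euc N,
        |u x| ^ q ≤ |u x - c| ^ q + (q * c) * (|u x| ^ (q - 2) * u x) := by
      intro x
      have h := tangent_ineq hq (u x) c
      nlinarith [h]
    have hint : ∫ x in Ω, |u x| ^ q
        ≤ ∫ x in Ω, (|u x - c| ^ q + (q * c) * (|u x| ^ (q - 2) * u x)) :=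
      integral_mono hIuq (hIc.add (hIg.const_mul _)) hpt
    have heq : ∫ x in Ω, (|u x - c| ^ q + (q * c) * (|u x| ^ (q - 2) * u x))
        = ∫ x in Ω, |u x - c| ^ q := by
      rw [integral_add hIc (hIg.const_mul _), integral_const_mul, horth, mul_zero, add_zero]
    have e1 : (∫⁻ x in Ω, ENNReal.ofReal (|u x| ^ q))
        = ENNReal.ofReal (∫ x in Ω, |u x| ^ q) :=
      (ofReal_integral_eq_lintegral_ofReal hIuq
        (Filter.Eventually.of_forall fun x => Real.rpow_nonneg (abs_nonneg _) q)).symm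
    have e2 : (∫⁻ x in Ω, ENNReal.ofReal (|u x - c| ^ q))
        = ENNReal.ofReal (∫ x in Ω, |u x - c| ^ q) :=
      (ofReal_integral_eq_lintegral_ofReal hIc
        (Filter.Eventually.of_forall fun x => Real.rpow_nonneg (abs_nonneg _) q)).symm
    rw [e1, e2]
    exact ENNReal.ofReal_le_ofReal (by linarith)

end Aux3
section Aux4
variable {N : ℕ} {Ω : Set (Euc N)} {s₂ q : ℝ}

lemma key0 (hN : 2 ≤ N) (hΩo : IsOpen Ω) (hΩpos : volume Ω ≠ 0) (hq : 1 < q)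
    (hE : 0 < (N:ℝ) + s₂ * q) {u : Euc N → ℝ} (hu : memX Ω s₂ q u)
    (hg : gagliardo Ω s₂ q u = 0) (hk : (∫ x in Ω, |u x| ^ q) = 0) :
    u =ᵐ[volume] fun _ => (0:ℝ) := by
  obtain ⟨c, hc⟩ := exists_const_of_gagliardo_zero hN hΩo hΩpos hq hE hu.1 hg
  have hfin1 : (∫⁻ x in Ω, ENNReal.ofReal (|u x| ^ q)) ≠ ⊤ := by
    have h2 := hu.2
    exact ne_of_lt (lt_of_le_of_lt (self_le_add_right _ _) h2)
  have hq0 : (0:ℝ) ≤ q := by linarith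
  have hmu : Measurable fun x : Euc N => |u x| ^ q :=
    (Real.continuous_rpow_const hq0).measurable.comp hu.1.abs
  have hIuq : IntegrableOn (fun x => |u x| ^ q) Ω :=
    integrableOn_of_lintegral hmu (fun x => Real.rpow_nonneg (abs_nonneg _) q) hfin1
  have h0 : (fun x => |u x| ^ q) =ᵐ[volume.restrict Ω] 0 :=
    (integral_eq_zero_iff_of_nonneg
      (fun x => Real.rpow_nonneg (abs_nonneg _) q) hIuq).mp hk
  have hu0 : ∀ᵐ x ∂(volume.restrict Ω), u x = 0 := by
    filter_upwards [h0] with x hx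
    have : |u x| = 0 := by
      rcases (Real.rpow_eq_zero_iff_of_nonneg (abs_nonneg _)).mp hx with ⟨h', _⟩
      exact h'
    exact abs_eq_zero.mp this
  have hc' : ∀ᵐ x ∂(volume.restrict Ω), u x = c := ae_restrict_of_ae hc
  have hnebot : (ae ((volume : Measure (Euc N)).restrict Ω)).NeBot :=
    ae_neBot.mpr (by rwa [Ne, Measure.restrict_eq_zero])
  obtain ⟨x₀, hx₀, hx₀'⟩ := (hu0.and hc').exists
  rw [← hx₀', hx₀] at hc
  exact hc

end Aux4
/-- Proposition 2.8. (i) No negative number is an eigenvalue of the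
fractional `q`-Neumann problem; (ii) `0` is an eigenvalue whose eigenfunctions are exactly
the functions a.e. equal to a nonzero constant; (iii) if the embedding
`X_{s₂,q} ↪ L^q(Ω)` is compact, then `0` is isolated in the set of eigenvalues. -/
theorem stmt_3 (N : ℕ) (hN : 2 ≤ N) (Ω : Set (Euc N)) (hΩne : Ω.Nonempty)
    (hΩo : IsOpen Ω) (hΩb : Bornology.IsBounded Ω) (s₂ q : ℝ)
    (hs₂0 : 0 < s₂) (hs₂1 : s₂ < 1) (hq : 1 < q) :
    (∀ lam : ℝ, lam < 0 → ¬ IsEigenQ Ω s₂ q lam) ∧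
    (IsEigenQ Ω s₂ q 0 ∧
      ∀ u : Euc N → ℝ, memX Ω s₂ q u →
        (((¬ (u =ᵐ[volume] fun _ => (0 : ℝ))) ∧
            ∀ v : Euc N → ℝ, memX Ω s₂ q v → energyForm Ω s₂ q u v = 0) ↔
          ∃ c : ℝ, c ≠ 0 ∧ u =ᵐ[volume] fun _ => c)) ∧
    (CompactEmbed Ω s₂ q →
      ∃ δ : ℝ, 0 < δ ∧ ∀ lam : ℝ, 0 < lam → lam < δ → ¬ IsEigenQ Ω s₂ q lam) := by
  have hq0 : (0:ℝ) < q := lt_trans zero_lt_one hq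
  have hE : 0 < (N:ℝ) + s₂ * q := by
    have h1 : (0:ℝ) ≤ (N:ℝ) := Nat.cast_nonneg N
    nlinarith [mul_pos hs₂0 hq0]
  have hΩpos : volume Ω ≠ 0 := (hΩo.measure_pos volume hΩne).ne'
  have hΩfin : volume Ω < ⊤ := hΩb.measure_lt_top
  have eigenak : ∀ lam : ℝ, ∀ u : Euc N → ℝ, memX Ω s₂ q u →
      (∀ v : Euc N → ℝ, memX Ω s₂ q v →
        energyForm Ω s₂ q u v = lam * ∫ x in Ω, |u x| ^ (q - 2) * u x * v x) →
      semiPow Ω s₂ q u = lam * ∫ x in Ω, |u x| ^ q := by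
    intro lam u hu heq
    have h := heq u hu
    rw [energyForm_self hq hE.le hu.1] at h
    rw [h]
    congr 1
    exact integral_congr_ae (Filter.Eventually.of_forall fun x => rpow_id_self hq (u x))
  have finparts : ∀ u : Euc N → ℝ, memX Ω s₂ q u →
      (∫⁻ x in Ω, ENNReal.ofReal (|u x| ^ q)) ≠ ⊤ ∧ gagliardo Ω s₂ q u ≠ ⊤ := by
    intro u hu
    exact ⟨ne_of_lt (lt_of_le_of_lt (self_le_add_right _ _) hu.2),
      ne_of_lt (lt_of_le_of_lt (self_le_add_left _ _) hu.2)⟩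
  refine ⟨?_, ⟨?_, ?_⟩, ?_⟩
  · -- part (i)
    rintro lam hlam ⟨u, hu, hu0, heq⟩
    have hself := eigenak lam u hu heq
    have hknn : 0 ≤ ∫ x in Ω, |u x| ^ q :=
      integral_nonneg fun x => Real.rpow_nonneg (abs_nonneg _) q
    have hspnn : 0 ≤ semiPow Ω s₂ q u := ENNReal.toReal_nonneg
    have hk0 : (∫ x in Ω, |u x| ^ q) = 0 := by
      by_contra hk
      have hkpos : 0 < ∫ x in Ω, |u x| ^ q := lt_of_le_of_ne hknn (Ne.symm hk)
      have hneg : lam * ∫ x in Ω, |u x| ^ q < 0 := mul_neg_of_neg_of_pos hlam hkpos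
      linarith [hself ▸ hspnn]
    have hsp0 : semiPow Ω s₂ q u = 0 := by rw [hself, hk0, mul_zero]
    have hgag0 : gagliardo Ω s₂ q u = 0 := by
      rcases (ENNReal.toReal_eq_zero_iff _).mp hsp0 with h | h
      · exact h
      · exact absurd h (finparts u hu).2
    exact hu0 (key0 hN hΩo hΩpos hq hE hu hgag0 hk0)
  · -- part (ii) : 0 is an eigenvalue
    refine ⟨fun _ => 1, memX_const hq hΩb 1, ?_, ?_⟩
    · intro h
      obtain ⟨x, hx⟩ := h.exists
      exact one_ne_zero hx
    · intro v hv
      rw [energyForm_const_left, zero_mul]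
  · -- part (ii) : characterization
    intro u huX
    constructor
    · rintro ⟨hu0, hEv⟩
      have h := hEv u huX
      rw [energyForm_self hq hE.le huX.1] at h
      have hgag0 : gagliardo Ω s₂ q u = 0 := by
        rcases (ENNReal.toReal_eq_zero_iff _).mp h with h' | h'
        · exact h'
        · exact absurd h' (finparts u huX).2
      obtain ⟨c, hc⟩ := exists_const_of_gagliardo_zero hN hΩo hΩpos hq hE huX.1 hgag0
      refine ⟨c, ?_, hc⟩
      intro hc0
      rw [hc0] at hc
      exact hu0 hc
    · rintro ⟨c, hc0, hcae⟩
      refine ⟨?_, fun v _ => energyForm_of_aeconst hcae v⟩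
      intro h
      have h2 : (fun _ : Euc N => c) =ᵐ[volume] fun _ => (0:ℝ) := hcae.symm.trans h
      obtain ⟨x, hx⟩ := h2.exists
      exact hc0 hx
  · -- part (iii)
    intro _
    set R := max (Metric.diam Ω) 1 with hRdef
    have hRpos : (0:ℝ) < R := lt_of_lt_of_le one_pos (le_max_right _ _)
    have hmpos : 0 < (volume Ω).toReal := ENNReal.toReal_pos hΩpos hΩfin.ne
    have hapos : 0 < R ^ (-((N:ℝ) + s₂ * q)) := Real.rpow_pos_of_pos hRpos _
    refine ⟨(volume Ω).toReal * R ^ (-((N:ℝ) + s₂ * q)), mul_pos hmpos hapos, ?_⟩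
    rintro lam hlam0 hlamδ ⟨u, hu, hu0, heqn⟩
    obtain ⟨hfin1, hfin2⟩ := finparts u hu
    have hself := eigenak lam u hu heqn
    have hknn : 0 ≤ ∫ x in Ω, |u x| ^ q :=
      integral_nonneg fun x => Real.rpow_nonneg (abs_nonneg _) q
    have hkpos : 0 < ∫ x in Ω, |u x| ^ q := by
      rcases lt_or_eq_of_le hknn with h | h
      · exact h
      · exfalso
        have hk0 : (∫ x in Ω, |u x| ^ q) = 0 := h.symm
        have hsp0 : semiPow Ω s₂ q u = 0 := by rw [hself, hk0, mul_zero]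
        have hgag0 : gagliardo Ω s₂ q u = 0 := by
          rcases (ENNReal.toReal_eq_zero_iff _).mp hsp0 with h' | h'
          · exact h'
          · exact absurd h' hfin2
        exact hu0 (key0 hN hΩo hΩpos hq hE hu hgag0 hk0)
    have horth : (∫ x in Ω, |u x| ^ (q - 2) * u x) = 0 := by
      have h := heqn (fun _ => 1) (memX_const hq hΩb 1)
      rw [energyForm_const_right] at h
      simp only [mul_one] at h
      exact (mul_eq_zero.mp h.symm).resolve_left (ne_of_gt hlam0)
    -- the main chain
    have hmeasnum : Measurable fun z : Euc N × Euc N =>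
        ENNReal.ofReal (|u z.1 - u z.2| ^ q) :=
      (meas_num hu.1 hq0.le).ennreal_ofReal
    have hsubQ : (Ω ×ˢ Ω : Set (Euc N × Euc N)) ⊆ Qset Ω := fun z hz => Or.inl hz.1
    have step1 : (∫⁻ z in Ω ×ˢ Ω,
        ENNReal.ofReal (|u z.1 - u z.2| ^ q / ‖z.1 - z.2‖ ^ ((N:ℝ) + s₂ * q)))
        ≤ gagliardo Ω s₂ q u := by
      rw [gagliardo]
      exact lintegral_mono' (Measure.restrict_mono hsubQ le_rfl) le_rfl
    have step2 : (∫⁻ z in Ω ×ˢ Ω, ENNReal.ofReal (R ^ (-((N:ℝ) + s₂ * q)))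
          * ENNReal.ofReal (|u z.1 - u z.2| ^ q))
        ≤ ∫⁻ z in Ω ×ˢ Ω,
          ENNReal.ofReal (|u z.1 - u z.2| ^ q / ‖z.1 - z.2‖ ^ ((N:ℝ) + s₂ * q)) := by
      apply lintegral_mono_ae
      filter_upwards [ae_restrict_mem (hΩo.measurableSet.prod hΩo.measurableSet)] with z hz
      rcases eq_or_ne z.1 z.2 with he | hne
      · simp only [he, sub_self, abs_zero, Real.zero_rpow hq0.ne', ENNReal.ofReal_zero,
          mul_zero, zero_div]
        exact zero_le
      · have hnpos : 0 < ‖z.1 - z.2‖ := norm_pos_iff.mpr (sub_ne_zero.mpr hne)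
        have hdle : ‖z.1 - z.2‖ ≤ R := by
          rw [← dist_eq_norm]
          exact le_trans (Metric.dist_le_diam_of_mem hΩb hz.1 hz.2) (le_max_left _ _)
        have hker : ‖z.1 - z.2‖ ^ ((N:ℝ) + s₂ * q) ≤ R ^ ((N:ℝ) + s₂ * q) :=
          Real.rpow_le_rpow (norm_nonneg _) hdle hE.le
        have hkerpos : 0 < ‖z.1 - z.2‖ ^ ((N:ℝ) + s₂ * q) :=
          Real.rpow_pos_of_pos hnpos _
        have hptr : R ^ (-((N:ℝ) + s₂ * q)) * |u z.1 - u z.2| ^ q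
            ≤ |u z.1 - u z.2| ^ q / ‖z.1 - z.2‖ ^ ((N:ℝ) + s₂ * q) := by
          rw [Real.rpow_neg hRpos.le, div_eq_mul_inv, mul_comm]
          exact mul_le_mul_of_nonneg_left (inv_anti₀ hkerpos hker)
            (Real.rpow_nonneg (abs_nonneg _) q)
        calc ENNReal.ofReal (R ^ (-((N:ℝ) + s₂ * q)))
              * ENNReal.ofReal (|u z.1 - u z.2| ^ q)
            = ENNReal.ofReal (R ^ (-((N:ℝ) + s₂ * q)) * |u z.1 - u z.2| ^ q) :=
              (ENNReal.ofReal_mul hapos.le).symm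
          _ ≤ _ := ENNReal.ofReal_le_ofReal hptr
    have step3 : (∫⁻ z in Ω ×ˢ Ω, ENNReal.ofReal (R ^ (-((N:ℝ) + s₂ * q)))
          * ENNReal.ofReal (|u z.1 - u z.2| ^ q))
        = ENNReal.ofReal (R ^ (-((N:ℝ) + s₂ * q)))
          * ∫⁻ z in Ω ×ˢ Ω, ENNReal.ofReal (|u z.1 - u z.2| ^ q) :=
      lintegral_const_mul _ hmeasnum
    have step4 : (∫⁻ x in Ω, ENNReal.ofReal (|u x| ^ q)) * volume Ω
        ≤ ∫⁻ z in Ω ×ˢ Ω, ENNReal.ofReal (|u z.1 - u z.2| ^ q) := by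
      have hrp : (volume : Measure (Euc N × Euc N)).restrict (Ω ×ˢ Ω)
          = ((volume : Measure (Euc N)).restrict Ω).prod
            ((volume : Measure (Euc N)).restrict Ω) := by
        rw [MeasureTheory.Measure.volume_eq_prod, Measure.prod_restrict]
      rw [hrp, lintegral_prod _ hmeasnum.aemeasurable]
      have hinner : ∀ x : Euc N, (∫⁻ x' in Ω, ENNReal.ofReal (|u x'| ^ q))
          ≤ ∫⁻ y in Ω, ENNReal.ofReal (|u x - u y| ^ q) := by
        intro x
        have h := key_lower hq hΩb hu.1 hfin1 horth (u x)
        have hcg : (∫⁻ y in Ω, ENNReal.ofReal (|u y - u x| ^ q))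
            = ∫⁻ y in Ω, ENNReal.ofReal (|u x - u y| ^ q) :=
          lintegral_congr fun y => by rw [abs_sub_comm]
        rw [hcg] at h
        exact h
      refine le_trans (le_of_eq ?_) (lintegral_mono fun x => hinner x)
      rw [lintegral_const, Measure.restrict_apply_univ]
    have hq0' : ∀ x : Euc N, (0:ℝ) ≤ |u x| ^ q := fun x => Real.rpow_nonneg (abs_nonneg _) q
    have hmu : Measurable fun x : Euc N => |u x| ^ q :=
      (Real.continuous_rpow_const hq0.le).measurable.comp hu.1.abs
    have hIuq : IntegrableOn (fun x => |u x| ^ q) Ω :=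
      integrableOn_of_lintegral hmu hq0' hfin1
    have hK : (∫⁻ x in Ω, ENNReal.ofReal (|u x| ^ q))
        = ENNReal.ofReal (∫ x in Ω, |u x| ^ q) :=
      (ofReal_integral_eq_lintegral_ofReal hIuq (Filter.Eventually.of_forall hq0')).symm
    have hgag : gagliardo Ω s₂ q u = ENNReal.ofReal (lam * ∫ x in Ω, |u x| ^ q) := by
      conv_lhs => rw [← ENNReal.ofReal_toReal hfin2]
      rw [show (gagliardo Ω s₂ q u).toReal = semiPow Ω s₂ q u from rfl, hself]
    have hfinal : ENNReal.ofReal (R ^ (-((N:ℝ) + s₂ * q)) * ((∫ x in Ω, |u x| ^ q)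
          * (volume Ω).toReal))
        ≤ ENNReal.ofReal (lam * ∫ x in Ω, |u x| ^ q) := by
      calc ENNReal.ofReal (R ^ (-((N:ℝ) + s₂ * q)) * ((∫ x in Ω, |u x| ^ q)
            * (volume Ω).toReal))
          = ENNReal.ofReal (R ^ (-((N:ℝ) + s₂ * q)))
            * (ENNReal.ofReal (∫ x in Ω, |u x| ^ q) * ENNReal.ofReal ((volume Ω).toReal)) := by
            rw [ENNReal.ofReal_mul hapos.le, ENNReal.ofReal_mul hknn]
        _ = ENNReal.ofReal (R ^ (-((N:ℝ) + s₂ * q)))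
            * ((∫⁻ x in Ω, ENNReal.ofReal (|u x| ^ q)) * volume Ω) := by
            rw [hK, ENNReal.ofReal_toReal hΩfin.ne]
        _ ≤ ENNReal.ofReal (R ^ (-((N:ℝ) + s₂ * q)))
            * ∫⁻ z in Ω ×ˢ Ω, ENNReal.ofReal (|u z.1 - u z.2| ^ q) :=
            mul_le_mul_right step4 _
        _ = ∫⁻ z in Ω ×ˢ Ω, ENNReal.ofReal (R ^ (-((N:ℝ) + s₂ * q)))
            * ENNReal.ofReal (|u z.1 - u z.2| ^ q) := step3.symm
        _ ≤ ∫⁻ z in Ω ×ˢ Ω,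
            ENNReal.ofReal (|u z.1 - u z.2| ^ q / ‖z.1 - z.2‖ ^ ((N:ℝ) + s₂ * q)) := step2
        _ ≤ gagliardo Ω s₂ q u := step1
        _ = ENNReal.ofReal (lam * ∫ x in Ω, |u x| ^ q) := hgag
    have hreal : R ^ (-((N:ℝ) + s₂ * q)) * ((∫ x in Ω, |u x| ^ q) * (volume Ω).toReal)
        ≤ lam * ∫ x in Ω, |u x| ^ q :=
      (ENNReal.ofReal_le_ofReal_iff (by positivity)).mp hfinal
    nlinarith [hreal, hkpos, hlamδ, hapos, hmpos,
      mul_pos (mul_pos hapos hkpos) hmpos]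
end
end

section
/- Let s₁, s₂ ∈ (0,1) and p, q ∈ (1,∞) with p ≠ q. Assume there exists u₁ ∈ X_{s₁,p} ∩ 𝒞_{s₂,q} with ∫_Ω |u₁|^q dx = 1 and [u₁]_{s₂,q}^q = λ₁(s₂,q). Let 𝒞 = { u ∈ X_{s₁,p} ∩ X_{s₂,q} : ∫_Ω |u|^{q−2} u dx = 0 }. Then inf { ( (1/p) [u]_{s₁,p}^p + (1/q) [u]_{s₂,q}^q ) / ( (1/q) ∫_Ω |u|^q dx ) : u ∈ 𝒞 with ∫_Ω |u|^q dx > 0 } = λ₁(s₂,q). -/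
open MeasureTheory Filter Topology
open scoped ENNReal

noncomputable section

section aux

variable {N : ℕ} {Ω : Set (Euc N)} {s r : ℝ}

lemma gagliardo_smul (c : ℝ) (u : Euc N → ℝ) :
    gagliardo Ω s r (fun x => c * u x)
      = ENNReal.ofReal (|c| ^ r) * gagliardo Ω s r u := by
  unfold gagliardo
  rw [← lintegral_const_mul' _ _ ENNReal.ofReal_ne_top]
  refine lintegral_congr fun z => ?_
  rw [← ENNReal.ofReal_mul (by positivity)]
  congr 1
  rw [← mul_sub, abs_mul, Real.mul_rpow (abs_nonneg _) (abs_nonneg _), mul_div_assoc]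

lemma lint_smul (c : ℝ) (u : Euc N → ℝ) :
    (∫⁻ x in Ω, ENNReal.ofReal (|c * u x| ^ r))
      = ENNReal.ofReal (|c| ^ r) * ∫⁻ x in Ω, ENNReal.ofReal (|u x| ^ r) := by
  rw [← lintegral_const_mul' _ _ ENNReal.ofReal_ne_top]
  refine lintegral_congr fun x => ?_
  rw [← ENNReal.ofReal_mul (by positivity), abs_mul,
    Real.mul_rpow (abs_nonneg _) (abs_nonneg _)]

lemma memX_smul (c : ℝ) {u : Euc N → ℝ} (h : memX Ω s r u) :
    memX Ω s r (fun x => c * u x) := by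
  refine ⟨h.1.const_mul c, ?_⟩
  rw [lint_smul, gagliardo_smul, ← mul_add]
  exact ENNReal.mul_lt_top ENNReal.ofReal_lt_top h.2

lemma gagliardo_ne_top {u : Euc N → ℝ} (h : memX Ω s r u) :
    gagliardo Ω s r u ≠ ⊤ :=
  (lt_of_le_of_lt le_add_self h.2).ne

lemma semiPow_smul (c : ℝ) {u : Euc N → ℝ} (h : memX Ω s r u) :
    semiPow Ω s r (fun x => c * u x) = |c| ^ r * semiPow Ω s r u := by
  unfold semiPow
  rw [gagliardo_smul, ENNReal.toReal_mul, ENNReal.toReal_ofReal (by positivity)]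

lemma semiPow_nonneg (u : Euc N → ℝ) : 0 ≤ semiPow Ω s r u :=
  ENNReal.toReal_nonneg

lemma int_rpow_smul (c : ℝ) (u : Euc N → ℝ) :
    (∫ x in Ω, |c * u x| ^ r) = |c| ^ r * ∫ x in Ω, |u x| ^ r := by
  simp_rw [abs_mul, Real.mul_rpow (abs_nonneg _) (abs_nonneg _)]
  exact integral_const_mul _ _

lemma int_constraint_smul (c : ℝ) (u : Euc N → ℝ) {q : ℝ} :
    (∫ x in Ω, |c * u x| ^ (q - 2) * (c * u x))
      = (|c| ^ (q - 2) * c) * ∫ x in Ω, |u x| ^ (q - 2) * u x := by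
  have : ∀ x, |c * u x| ^ (q - 2) * (c * u x)
      = (|c| ^ (q - 2) * c) * (|u x| ^ (q - 2) * u x) := fun x => by
    rw [abs_mul, Real.mul_rpow (abs_nonneg _) (abs_nonneg _)]; ring
  simp_rw [this]
  exact integral_const_mul _ _

/-- Lower bound: every element of the quotient set is `≥ λ₁`. -/
lemma lam1_lower {s₁ s₂ p q : ℝ} (hp : 1 < p) (hq : 1 < q) :
    ∀ t ∈ {t : ℝ | ∃ u : Euc N → ℝ, memX Ω s₁ p u ∧ memX Ω s₂ q u ∧
        (∫ x in Ω, |u x| ^ (q - 2) * u x) = 0 ∧ 0 < (∫ x in Ω, |u x| ^ q) ∧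
        t = ((1 / p) * semiPow Ω s₁ p u + (1 / q) * semiPow Ω s₂ q u) /
              ((1 / q) * ∫ x in Ω, |u x| ^ q)}, lam1 Ω s₂ q ≤ t := by
  rintro t ⟨u, hup, huq, hcon, hCpos, rfl⟩
  have hq0 : (0 : ℝ) < q := lt_trans one_pos hq
  have hp0 : (0 : ℝ) < p := lt_trans one_pos hp
  set A := semiPow Ω s₁ p u with hA
  set B := semiPow Ω s₂ q u with hB
  set C := (∫ x in Ω, |u x| ^ q) with hC
  set c : ℝ := C ^ (-(1 / q)) with hc
  have hcpos : 0 < c := Real.rpow_pos_of_pos hCpos _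
  have hcq : c ^ q = C⁻¹ := by
    rw [hc, ← Real.rpow_mul hCpos.le]
    have : -(1 / q) * q = -1 := by field_simp
    rw [this, Real.rpow_neg_one]
  -- the normalized function lies in the λ₁ defining set
  have hmem : B * C⁻¹ ∈ {t : ℝ | ∃ v : Euc N → ℝ, memX Ω s₂ q v ∧
      (∫ x in Ω, |v x| ^ (q - 2) * v x) = 0 ∧ (∫ x in Ω, |v x| ^ q) = 1 ∧
      t = semiPow Ω s₂ q v} := by
    refine ⟨fun x => c * u x, memX_smul c huq, ?_, ?_, ?_⟩
    · rw [int_constraint_smul, hcon, mul_zero]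
    · rw [int_rpow_smul, abs_of_pos hcpos, hcq, ← hC, inv_mul_cancel₀ hCpos.ne']
    · rw [semiPow_smul c huq, abs_of_pos hcpos, hcq, ← hB, mul_comm]
  have hbdd : BddBelow {t : ℝ | ∃ v : Euc N → ℝ, memX Ω s₂ q v ∧
      (∫ x in Ω, |v x| ^ (q - 2) * v x) = 0 ∧ (∫ x in Ω, |v x| ^ q) = 1 ∧
      t = semiPow Ω s₂ q v} := by
    refine ⟨0, ?_⟩
    rintro x ⟨v, -, -, -, rfl⟩
    exact semiPow_nonneg v
  have hlam : lam1 Ω s₂ q ≤ B * C⁻¹ := csInf_le hbdd hmem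
  refine le_trans hlam ?_
  have hAnn : 0 ≤ A := semiPow_nonneg u
  have hBC : B * C⁻¹ = (1 / q * B) / (1 / q * C) := by
    rw [mul_div_mul_left _ _ (by positivity : (1 : ℝ) / q ≠ 0), div_eq_mul_inv]
  rw [hBC]
  apply div_le_div_of_nonneg_right ?_ (by positivity)
  · nlinarith [mul_nonneg (by positivity : (0:ℝ) ≤ 1 / p) hAnn]

end aux

/-- equality (2.10)–(2.11). If `λ₁(s₂,q)` is attained by some
`u₁ ∈ X_{s₁,p} ∩ 𝒞_{s₂,q}` with `∫_Ω |u₁|^q = 1`, then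
`inf { ((1/p)[u]_{s₁,p}^p + (1/q)[u]_{s₂,q}^q) / ((1/q)∫_Ω |u|^q) : u ∈ 𝒞, ∫_Ω |u|^q > 0 }
 = λ₁(s₂,q)`. -/
theorem stmt_6 (N : ℕ) (hN : 2 ≤ N) (Ω : Set (Euc N)) (hΩne : Ω.Nonempty)
    (hΩo : IsOpen Ω) (hΩb : Bornology.IsBounded Ω) (s₁ s₂ p q : ℝ)
    (hs₁0 : 0 < s₁) (hs₁1 : s₁ < 1) (hs₂0 : 0 < s₂) (hs₂1 : s₂ < 1)
    (hp : 1 < p) (hq : 1 < q) (hpq : p ≠ q)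
    (u₁ : Euc N → ℝ) (hu₁p : memX Ω s₁ p u₁) (hu₁q : memX Ω s₂ q u₁)
    (hu₁C : (∫ x in Ω, |u₁ x| ^ (q - 2) * u₁ x) = 0)
    (hu₁n : (∫ x in Ω, |u₁ x| ^ q) = 1)
    (hu₁min : semiPow Ω s₂ q u₁ = lam1 Ω s₂ q) :
    sInf {t : ℝ | ∃ u : Euc N → ℝ, memX Ω s₁ p u ∧ memX Ω s₂ q u ∧
        (∫ x in Ω, |u x| ^ (q - 2) * u x) = 0 ∧ 0 < (∫ x in Ω, |u x| ^ q) ∧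
        t = ((1 / p) * semiPow Ω s₁ p u + (1 / q) * semiPow Ω s₂ q u) /
              ((1 / q) * ∫ x in Ω, |u x| ^ q)}
      = lam1 Ω s₂ q := by
  have hp0 : (0 : ℝ) < p := lt_trans one_pos hp
  have hq0 : (0 : ℝ) < q := lt_trans one_pos hq
  set S := {t : ℝ | ∃ u : Euc N → ℝ, memX Ω s₁ p u ∧ memX Ω s₂ q u ∧
      (∫ x in Ω, |u x| ^ (q - 2) * u x) = 0 ∧ 0 < (∫ x in Ω, |u x| ^ q) ∧
      t = ((1 / p) * semiPow Ω s₁ p u + (1 / q) * semiPow Ω s₂ q u) /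
            ((1 / q) * ∫ x in Ω, |u x| ^ q)} with hS
  have hlow : ∀ t ∈ S, lam1 Ω s₂ q ≤ t := lam1_lower hp hq
  have hne : S.Nonempty := by
    refine ⟨_, u₁, hu₁p, hu₁q, hu₁C, by rw [hu₁n]; exact one_pos, rfl⟩
  have hbdd : BddBelow S := ⟨lam1 Ω s₂ q, hlow⟩
  refine le_antisymm ?_ (le_csInf hne hlow)
  -- upper bound: sInf S ≤ λ₁ + ε for all ε > 0
  refine le_of_forall_pos_le_add fun ε hε => ?_
  set A := semiPow Ω s₁ p u₁ with hA
  have hAnn : 0 ≤ A := semiPow_nonneg u₁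
  set δ : ℝ := ε * p / (q * (A + 1)) with hδdef
  have hδ : 0 < δ := by positivity
  set c : ℝ := δ ^ (1 / (p - q)) with hcdef
  have hcpos : 0 < c := Real.rpow_pos_of_pos hδ _
  have hpq' : p - q ≠ 0 := sub_ne_zero.mpr hpq
  have hcd : c ^ (p - q) = δ := by
    rw [hcdef, ← Real.rpow_mul hδ.le]
    rw [one_div, inv_mul_cancel₀ hpq', Real.rpow_one]
  have hcq : (0 : ℝ) < c ^ q := Real.rpow_pos_of_pos hcpos _
  have hcp : c ^ p = δ * c ^ q := by
    have : p = (p - q) + q := by ring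
    rw [this, Real.rpow_add hcpos, hcd]
  -- the test function c * u₁
  set t₀ : ℝ := ((1 / p) * (c ^ p * A) + (1 / q) * (c ^ q * lam1 Ω s₂ q)) /
      ((1 / q) * (c ^ q * 1)) with ht₀
  have hmem : t₀ ∈ S := by
    refine ⟨fun x => c * u₁ x, memX_smul c hu₁p, memX_smul c hu₁q, ?_, ?_, ?_⟩
    · rw [int_constraint_smul, hu₁C, mul_zero]
    · rw [int_rpow_smul, hu₁n, abs_of_pos hcpos]
      positivity
    · rw [semiPow_smul c hu₁p, semiPow_smul c hu₁q, int_rpow_smul, hu₁n,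
        abs_of_pos hcpos, hu₁min, ht₀]
  refine le_trans (csInf_le hbdd hmem) ?_
  -- t₀ ≤ λ₁ + ε
  have hkey : (1 / p) * δ * A ≤ ε * (1 / q) := by
    rw [hδdef]
    have h1 : ε * p / (q * (A + 1)) * A * q ≤ ε * p := by
      rw [div_mul_eq_mul_div, div_mul_eq_mul_div, div_le_iff₀ (by positivity)]
      nlinarith [mul_pos (mul_pos hε hp0) hq0]
    calc 1 / p * (ε * p / (q * (A + 1))) * A
        = (ε * p / (q * (A + 1)) * A * q) * (1 / q) * (1 / p) := by
          field_simp
      _ ≤ (ε * p) * (1 / q) * (1 / p) := by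
          apply mul_le_mul_of_nonneg_right ?_ (by positivity)
          exact mul_le_mul_of_nonneg_right h1 (by positivity)
      _ = ε * (1 / q) * p * (1 / p) := by ring
      _ = ε * (1 / q) := by rw [mul_assoc, mul_one_div p p, div_self hp0.ne', mul_one]
  rw [ht₀, div_le_iff₀ (by positivity), hcp]
  nlinarith [mul_le_mul_of_nonneg_right hkey hcq.le]
end
end

section
/- Let s₁, s₂ ∈ (0,1) and p, q ∈ (1,∞). If λ is an eigenvalue of problem (1.1) with eigenfunction u, then λ ≥ 0; and if λ > 0, then necessarily ∫_Ω |u|^{q−2} u dx = 0. -/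
open MeasureTheory Filter Topology
open scoped ENNReal

noncomputable section

private lemma abs_rpow_mul_self (r : ℝ) (hr : 0 < r) (d : ℝ) :
    |d| ^ (r - 2) * d * d = |d| ^ r := by
  rcases eq_or_ne d 0 with h | h
  · simp [h, Real.zero_rpow hr.ne']
  · have hd : 0 < |d| := abs_pos.mpr h
    have h2 : d * d = |d| ^ (2 : ℝ) := by
      rw [show (2:ℝ) = ((2:ℕ):ℝ) by norm_num, Real.rpow_natCast]
      rw [sq_abs]; ring
    rw [mul_assoc, h2, ← Real.rpow_add hd]
    ring_nf

/-- The energy form of `u` against itself equals the Gagliardo energy. -/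
private lemma energyForm_self_s7 {N : ℕ} (Ω : Set (Euc N)) (s r : ℝ) (hs : 0 ≤ s) (hr : 0 < r)
    (u : Euc N → ℝ) (hm : Measurable u) :
    energyForm Ω s r u u = semiPow Ω s r u := by
  have hpt : ∀ z : Euc N × Euc N,
      (|u z.1 - u z.2| ^ (r - 2) * (u z.1 - u z.2) * (u z.1 - u z.2)) /
        ‖z.1 - z.2‖ ^ ((N : ℝ) + s * r)
      = |u z.1 - u z.2| ^ r / ‖z.1 - z.2‖ ^ ((N : ℝ) + s * r) := by
    intro z; rw [abs_rpow_mul_self r hr]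
  have hcr : ∀ c : ℝ, 0 ≤ c → Measurable (fun x : ℝ => x ^ c) :=
    fun c hc => (Real.continuous_rpow_const hc).measurable
  have hmeas : Measurable fun z : Euc N × Euc N =>
      |u z.1 - u z.2| ^ r / ‖z.1 - z.2‖ ^ ((N : ℝ) + s * r) := by
    have hα : (0:ℝ) ≤ (N : ℝ) + s * r := by positivity
    exact ((hcr r hr.le).comp
        (((hm.comp measurable_fst).sub (hm.comp measurable_snd)).abs)).div
      ((hcr _ hα).comp ((measurable_fst.sub measurable_snd).norm))
  unfold energyForm semiPow gagliardo
  simp_rw [hpt]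
  rw [MeasureTheory.integral_eq_lintegral_of_nonneg_ae
    (Filter.Eventually.of_forall fun z =>
      div_nonneg (Real.rpow_nonneg (abs_nonneg _) _) (Real.rpow_nonneg (norm_nonneg _) _))
    hmeas.aestronglyMeasurable]

/-- If `λ` is an eigenvalue of problem (1.1) with eigenfunction `u`, then
`λ ≥ 0`; and if `λ > 0` then `∫_Ω |u|^{q-2} u = 0`. -/
theorem stmt_7 (N : ℕ) (hN : 2 ≤ N) (Ω : Set (Euc N)) (hΩne : Ω.Nonempty)
    (hΩo : IsOpen Ω) (hΩb : Bornology.IsBounded Ω) (s₁ s₂ p q : ℝ)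
    (hs₁0 : 0 < s₁) (hs₁1 : s₁ < 1) (hs₂0 : 0 < s₂) (hs₂1 : s₂ < 1)
    (hp : 1 < p) (hq : 1 < q) (lam : ℝ) (u : Euc N → ℝ)
    (hup : memX Ω s₁ p u) (huq : memX Ω s₂ q u)
    (hu0 : ¬ (u =ᵐ[volume] fun _ => (0 : ℝ)))
    (heq : ∀ v : Euc N → ℝ, memX Ω s₁ p v → memX Ω s₂ q v →
      energyForm Ω s₁ p u v + energyForm Ω s₂ q u v
        = lam * ∫ x in Ω, |u x| ^ (q - 2) * u x * v x) :
    0 ≤ lam ∧ (0 < lam → (∫ x in Ω, |u x| ^ (q - 2) * u x) = 0) := by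
  have hm : Measurable u := hup.1
  have hq0 : 0 < q := by linarith
  have hp0 : 0 < p := by linarith
  -- integral of |u|^{q-2} u * u equals toReal of lintegral of |u|^q
  set L : ℝ≥0∞ := ∫⁻ x in Ω, ENNReal.ofReal (|u x| ^ q) with hL
  have hLlt : L < ⊤ := lt_of_le_of_lt (le_add_right le_rfl) huq.2
  have hInt : (∫ x in Ω, |u x| ^ (q - 2) * u x * u x) = L.toReal := by
    have hpt : ∀ x, |u x| ^ (q - 2) * u x * u x = |u x| ^ q :=
      fun x => abs_rpow_mul_self q hq0 (u x)
    simp_rw [hpt]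
    rw [MeasureTheory.integral_eq_lintegral_of_nonneg_ae
      (Filter.Eventually.of_forall fun x => Real.rpow_nonneg (abs_nonneg _) _)
      (((Real.continuous_rpow_const hq0.le).measurable.comp hm.abs).aestronglyMeasurable)]
  have hmain := heq u hup huq
  rw [energyForm_self_s7 Ω s₁ p hs₁0.le hp0 u hm, energyForm_self_s7 Ω s₂ q hs₂0.le hq0 u hm, hInt] at hmain
  have hsp1 : 0 ≤ semiPow Ω s₁ p u := ENNReal.toReal_nonneg
  have hsp2 : 0 ≤ semiPow Ω s₂ q u := ENNReal.toReal_nonneg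
  have hLtR : 0 ≤ L.toReal := ENNReal.toReal_nonneg
  -- key: if L.toReal = 0 we get a contradiction with hu0
  have hLpos : 0 < L.toReal := by
    rcases hLtR.lt_or_eq with h | h
    · exact h
    exfalso
    -- L = 0, so u = 0 a.e. on Ω
    have hL0 : L = 0 := by
      rcases ENNReal.toReal_eq_zero_iff L |>.mp h.symm with h0 | h0
      · exact h0
      · exact absurd h0 hLlt.ne
    have huΩ : ∀ᵐ x ∂(volume.restrict Ω), u x = 0 := by
      have := (lintegral_eq_zero_iff
        (((Real.continuous_rpow_const hq0.le).measurable.comp hm.abs).ennreal_ofReal)).mp hL0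
      filter_upwards [this] with x hx
      have hle : |u x| ^ q ≤ 0 := ENNReal.ofReal_eq_zero.mp hx
      have : |u x| ^ q = 0 := le_antisymm hle (Real.rpow_nonneg (abs_nonneg _) _)
      have := (Real.rpow_eq_zero (abs_nonneg _) hq0.ne').mp this
      exact abs_eq_zero.mp this
    -- gagliardo energy in q vanishes
    have hsum0 : semiPow Ω s₁ p u + semiPow Ω s₂ q u = 0 := by
      rw [hmain, ← h, mul_zero]
    have hsp2z : semiPow Ω s₂ q u = 0 := by linarith
    have hgfin : gagliardo Ω s₂ q u < ⊤ := lt_of_le_of_lt (le_add_left le_rfl) huq.2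
    have hg0 : gagliardo Ω s₂ q u = 0 := by
      rcases ENNReal.toReal_eq_zero_iff _ |>.mp hsp2z with h0 | h0
      · exact h0
      · exact absurd h0 hgfin.ne
    -- hence u z.1 = u z.2 a.e. on Q
    have hα : (0:ℝ) ≤ (N : ℝ) + s₂ * q := by positivity
    have hmeasq : Measurable fun z : Euc N × Euc N =>
        |u z.1 - u z.2| ^ q / ‖z.1 - z.2‖ ^ ((N : ℝ) + s₂ * q) :=
      (((Real.continuous_rpow_const hq0.le).measurable.comp
        (((hm.comp measurable_fst).sub (hm.comp measurable_snd)).abs)).div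
        (((Real.continuous_rpow_const hα).measurable.comp
          ((measurable_fst.sub measurable_snd).norm))))
    have hQae : ∀ᵐ z ∂(volume.restrict (Qset Ω)), u z.1 = u z.2 := by
      have := (lintegral_eq_zero_iff hmeasq.ennreal_ofReal).mp hg0
      filter_upwards [this] with z hz
      have hle : |u z.1 - u z.2| ^ q / ‖z.1 - z.2‖ ^ ((N : ℝ) + s₂ * q) ≤ 0 :=
        ENNReal.ofReal_eq_zero.mp hz
      rcases eq_or_ne z.1 z.2 with he | he
      · rw [he]
      · have hden : (0:ℝ) < ‖z.1 - z.2‖ ^ ((N : ℝ) + s₂ * q) :=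
          Real.rpow_pos_of_pos (norm_pos_iff.mpr (sub_ne_zero.mpr he)) _
        have hnum : |u z.1 - u z.2| ^ q ≤ 0 := by
          by_contra hc
          push_neg at hc
          exact absurd hle (not_le.mpr (div_pos hc hden))
        have : |u z.1 - u z.2| ^ q = 0 :=
          le_antisymm hnum (Real.rpow_nonneg (abs_nonneg _) _)
        have := (Real.rpow_eq_zero (abs_nonneg _) hq0.ne').mp this
        exact sub_eq_zero.mp (abs_eq_zero.mp this)
    -- restrict to Ω ×ˢ univ ⊆ Q
    have hsub : Ω ×ˢ (Set.univ : Set (Euc N)) ⊆ Qset Ω := fun z hz => Or.inl hz.1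
    have hQae2 : ∀ᵐ z ∂(volume.restrict (Ω ×ˢ (Set.univ : Set (Euc N)))), u z.1 = u z.2 :=
      hQae.filter_mono (ae_mono (Measure.restrict_mono hsub le_rfl))
    have hprod : (volume : Measure (Euc N × Euc N)).restrict
        (Ω ×ˢ (Set.univ : Set (Euc N)))
        = (volume.restrict Ω).prod volume := by
      rw [Measure.volume_eq_prod (Euc N) (Euc N), ← Measure.prod_restrict, Measure.restrict_univ]
    rw [hprod] at hQae2
    have hfub : ∀ᵐ x ∂(volume.restrict Ω), ∀ᵐ y ∂(volume : Measure (Euc N)),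
        u x = u y := Measure.ae_ae_of_ae_prod hQae2
    have hne : (volume.restrict Ω) ≠ 0 := by
      rw [Ne, Measure.restrict_eq_zero]
      exact (hΩo.measure_pos volume hΩne).ne'
    haveI : Filter.NeBot (ae (volume.restrict Ω)) := ae_neBot.mpr hne
    obtain ⟨x, hx0, hxeq⟩ := (huΩ.and hfub).exists
    exact hu0 (by filter_upwards [hxeq] with y hy; rw [← hy, hx0])
  constructor
  · nlinarith
  · intro hlam
    -- test against the constant function 1
    have mem1 : ∀ s r : ℝ, 0 < r → memX Ω s r (fun _ => (1:ℝ)) := by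
      intro s r hr
      refine ⟨measurable_const, ?_⟩
      have h1 : (∫⁻ x in Ω, ENNReal.ofReal (|(1:ℝ)| ^ r)) = volume Ω := by
        simp [Real.one_rpow]
      have h2 : gagliardo Ω s r (fun _ => (1:ℝ)) = 0 := by
        unfold gagliardo
        simp [Real.zero_rpow hr.ne']
      rw [h1, h2, add_zero]
      exact hΩb.measure_lt_top
    have he1 : ∀ s r : ℝ, energyForm Ω s r u (fun _ => (1:ℝ)) = 0 := by
      intro s r
      unfold energyForm
      simp
    have := heq (fun _ => (1:ℝ)) (mem1 s₁ p hp0) (mem1 s₂ q hq0)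
    rw [he1, he1] at this
    simp only [mul_one] at this
    have : lam * ∫ x in Ω, |u x| ^ (q - 2) * u x = 0 := by linarith
    exact (mul_eq_zero.mp this).resolve_left hlam.ne'
end
end

section
/- Let 0 < s₂ < s₁ < 1 and 1 < q < p < ∞, and let λ > 0. Then the functional F_λ is coercive on 𝒞: for every M ∈ ℝ there exists R > 0 such that every u ∈ 𝒞 with ‖u‖_{s₁,p} ≥ R satisfies F_λ(u) ≥ M. -/
open MeasureTheory Filter Topology
open scoped ENNReal

noncomputable section

lemma young_pt {p q ε a : ℝ} (hq : 0 < q) (hqp : q < p) (hε : 0 < ε) (ha : 0 ≤ a) :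
    a ^ q ≤ ε * a ^ p + (ε ^ (-(1:ℝ)/(p-q))) ^ q := by
  set A := ε ^ (-(1:ℝ)/(p-q)) with hA
  have hA0 : 0 < A := Real.rpow_pos_of_pos hε _
  rcases le_total a A with h | h
  · have h1 : a ^ q ≤ A ^ q := Real.rpow_le_rpow ha h hq.le
    have h2 : 0 ≤ ε * a ^ p := mul_nonneg hε.le (Real.rpow_nonneg ha p)
    linarith
  · have ha0 : 0 < a := lt_of_lt_of_le hA0 h
    have hpq : p - q ≠ 0 := by
      have : 0 < p - q := by linarith
      exact this.ne'
    have h1 : a ^ q = a ^ p * a ^ (q - p) := by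
      rw [← Real.rpow_add ha0]; ring_nf
    have h2 : a ^ (q - p) ≤ A ^ (q - p) :=
      Real.rpow_le_rpow_of_nonpos hA0 h (by linarith)
    have h3 : A ^ (q - p) = ε := by
      rw [hA, ← Real.rpow_mul hε.le,
        show (-(1:ℝ)/(p-q))*(q-p) = 1 by field_simp; ring, Real.rpow_one]
    have h4 : a ^ q ≤ a ^ p * ε := by
      rw [h1]
      exact mul_le_mul_of_nonneg_left (h3 ▸ h2) (Real.rpow_nonneg ha0.le p)
    have h5 : 0 ≤ A ^ q := Real.rpow_nonneg hA0.le q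
    nlinarith

lemma abs_g {q : ℝ} (hq : 1 < q) (x : ℝ) : |(|x| ^ (q-2) * x)| = |x| ^ (q-1) := by
  rcases eq_or_ne x 0 with hx | hx
  · simp [hx, Real.zero_rpow (by linarith : q - 1 ≠ 0)]
  · have hx0 : (0:ℝ) < |x| := abs_pos.mpr hx
    rw [abs_mul, abs_of_nonneg (Real.rpow_nonneg (abs_nonneg x) _),
      ← Real.rpow_add_one hx0.ne' (q-2), show q - 2 + 1 = q - 1 by ring]

lemma rpow_qm1_le {q : ℝ} (hq : 1 < q) (x : ℝ) : |x| ^ (q-1) ≤ 1 + |x| ^ q := by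
  rcases le_total (|x|) 1 with h | h
  · have h1 : |x| ^ (q-1) ≤ 1 := Real.rpow_le_one (abs_nonneg x) h (by linarith)
    have h2 : 0 ≤ |x| ^ q := Real.rpow_nonneg (abs_nonneg x) q
    linarith
  · have h1 : |x| ^ (q-1) ≤ |x| ^ q :=
      Real.rpow_le_rpow_of_exponent_le h (by linarith)
    linarith

lemma int_g {α : Type*} [MeasurableSpace α] {μ : Measure α} [IsFiniteMeasure μ]
    {q : ℝ} (hq : 1 < q) {u : α → ℝ} (hu : Measurable u)
    (hI : Integrable (fun x => |u x| ^ q) μ) :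
    Integrable (fun y => |u y| ^ (q-2) * u y) μ := by
  have hmeas : Measurable (fun y => |u y| ^ (q-2) * u y) :=
    (hu.abs.pow measurable_const).mul hu
  refine Integrable.mono ((integrable_const (1:ℝ)).add hI) hmeas.aestronglyMeasurable ?_
  filter_upwards with y
  have h1 : ‖|u y| ^ (q-2) * u y‖ = |u y| ^ (q-1) := by
    rw [Real.norm_eq_abs, abs_g hq]
  have h2 : |u y| ^ (q-1) ≤ 1 + |u y| ^ q := rpow_qm1_le hq (u y)
  have h3 : (0:ℝ) ≤ 1 + |u y| ^ q := by
    have := Real.rpow_nonneg (abs_nonneg (u y)) q; linarith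
  rw [h1]
  simp only [Pi.add_apply, Real.norm_eq_abs]
  rw [abs_of_nonneg h3]
  exact h2



lemma keyA_pos {α : Type*} [MeasurableSpace α] {μ : Measure α} [IsFiniteMeasure μ]
    {u : α → ℝ} (hu : Measurable u) {p q : ℝ} (hq : 1 < q) (hqp : q < p)
    (hg : Integrable (fun y => |u y| ^ (q-2) * u y) μ)
    (hint : (∫ y, |u y| ^ (q-2) * u y ∂μ) = 0)
    {a : ℝ} (ha : 0 < a) :
    ENNReal.ofReal ((2:ℝ) ^ (-(p+1)) * a ^ p) * μ Set.univ
      ≤ ∫⁻ y, ENNReal.ofReal (|a - u y| ^ p) ∂μ := by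
  have hp0 : (0:ℝ) < p := by linarith
  have hfmeas : Measurable (fun y => ENNReal.ofReal (|a - u y| ^ p)) :=
    (((measurable_const.sub hu).abs.pow measurable_const)).ennreal_ofReal
  set S : Set α := u ⁻¹' (Set.Iic (a/2)) with hSdef
  have hS : MeasurableSet S := hu measurableSet_Iic
  rcases le_or_gt (μ Set.univ) (2 * μ S) with hcase | hcase
  · -- case 1 : S has at least half the measure
    have hreal : (2:ℝ) ^ (-(p+1)) * a ^ p * 2 = (a/2) ^ p := by
      have h2p : (a/2) ^ p = a ^ p * (2:ℝ) ^ (-p) := by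
        rw [Real.div_rpow ha.le (by norm_num : (0:ℝ) ≤ 2),
          Real.rpow_neg (by norm_num : (0:ℝ) ≤ 2), div_eq_mul_inv]
      have hsplit : (2:ℝ) ^ (-(p+1)) = (2:ℝ) ^ (-p) * 2⁻¹ := by
        rw [show -(p+1) = -p + (-1) by ring, Real.rpow_add (by norm_num : (0:ℝ) < 2),
          Real.rpow_neg_one]
      rw [h2p, hsplit]; ring
    calc ENNReal.ofReal ((2:ℝ) ^ (-(p+1)) * a ^ p) * μ Set.univ
        ≤ ENNReal.ofReal ((2:ℝ) ^ (-(p+1)) * a ^ p) * (2 * μ S) := by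
          exact mul_le_mul_right hcase _
      _ = ENNReal.ofReal ((a/2) ^ p) * μ S := by
          rw [← mul_assoc]
          congr 1
          rw [show (2:ℝ≥0∞) = ENNReal.ofReal (2:ℝ) by norm_num,
            ← ENNReal.ofReal_mul (by positivity), hreal]
      _ = ∫⁻ _ in S, ENNReal.ofReal ((a/2) ^ p) ∂μ := by rw [setLIntegral_const]
      _ ≤ ∫⁻ y in S, ENNReal.ofReal (|a - u y| ^ p) ∂μ := by
          refine setLIntegral_mono hfmeas ?_
          intro y hy
          have hy' : u y ≤ a/2 := hy
          have h1 : a/2 ≤ |a - u y| := le_trans (by linarith) (le_abs_self _)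
          exact ENNReal.ofReal_le_ofReal
            (Real.rpow_le_rpow (by positivity) h1 hp0.le)
      _ ≤ ∫⁻ y, ENNReal.ofReal (|a - u y| ^ p) ∂μ := setLIntegral_le_lintegral _ _
  · -- case 2 : complement of S has at least half the measure
    set g : α → ℝ := fun y => |u y| ^ (q-2) * u y with hgdef
    set m : ℝ := (μ Set.univ).toReal with hmdef
    set mS : ℝ := (μ S).toReal with hmSdef
    set mSc : ℝ := (μ Sᶜ).toReal with hmScdef
    have hμS : μ S ≠ ⊤ := measure_ne_top _ _
    have hμSc : μ Sᶜ ≠ ⊤ := measure_ne_top _ _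
    have hμu : μ Set.univ ≠ ⊤ := measure_ne_top _ _
    have hmeq : mS + mSc = m := by
      rw [hmSdef, hmScdef, hmdef, ← ENNReal.toReal_add hμS hμSc,
        measure_add_measure_compl hS]
    have h2mS : 2 * mS < m := by
      have := (ENNReal.toReal_lt_toReal (by finiteness) hμu).mpr hcase
      rwa [ENNReal.toReal_mul, ENNReal.toReal_ofNat] at this
    have hmSc2 : m/2 ≤ mSc := by
      have h0 : 0 ≤ mS := ENNReal.toReal_nonneg
      linarith
    -- integral of g over Sᶜ is at least (a/2)^(q-1) * mSc
    have hstep1 : (a/2) ^ (q-1) * mSc ≤ ∫ y in Sᶜ, g y ∂μ := by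
      rw [show (a/2) ^ (q-1) * mSc = μ.real Sᶜ • (a/2) ^ (q-1) from mul_comm _ _]
      refine setIntegral_ge_of_const_le hS.compl hμSc ?_ hg.integrableOn
      intro y hy
      have hy' : a/2 < u y := by
        simpa [hSdef] using hy
      have hy0 : 0 < u y := lt_trans (by positivity) hy'
      rw [hgdef]
      simp only
      rw [abs_of_pos hy0, ← Real.rpow_add_one hy0.ne' (q-2),
        show q - 2 + 1 = q - 1 by ring]
      exact Real.rpow_le_rpow (by positivity) hy'.le (by linarith)
    have hcomp : (∫ y in S, g y ∂μ) + (∫ y in Sᶜ, g y ∂μ) = 0 := by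
      rw [integral_add_compl hS hg, hint]
    -- t : the set where u ≤ 0
    set t : Set α := u ⁻¹' (Set.Iic 0) with htdef
    have ht : MeasurableSet t := hu measurableSet_Iic
    have hsplitS : (∫ y in S ∩ t, g y ∂μ) + (∫ y in S \ t, g y ∂μ)
        = ∫ y in S, g y ∂μ := integral_inter_add_diff ht hg.integrableOn
    have hpos : 0 ≤ ∫ y in S \ t, g y ∂μ := by
      refine setIntegral_nonneg (hS.diff ht) ?_
      intro y hy
      have hy0 : 0 < u y := by
        have := hy.2
        simp only [htdef, Set.mem_preimage, Set.mem_Iic, not_le] at this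
        exact this
      exact mul_nonneg (Real.rpow_nonneg (abs_nonneg _) _) hy0.le
    have hSneg : (∫ y in S ∩ t, g y ∂μ) ≤ -((a/2) ^ (q-1) * mSc) := by linarith
    -- |u|^(q-1) equals -g on S ∩ t
    have habs_eq : Set.EqOn (fun y => |u y| ^ (q-1)) (fun y => -(g y)) (S ∩ t) := by
      intro y hy
      have hy0 : u y ≤ 0 := hy.2
      show |u y| ^ (q-1) = -(|u y| ^ (q-2) * u y)
      rcases eq_or_lt_of_le hy0 with h0 | h0
      · simp [h0, abs_zero, Real.zero_rpow (by linarith : q - 1 ≠ 0)]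
      · have habs : |u y| = -u y := abs_of_neg h0
        have hne : |u y| ≠ 0 := abs_ne_zero.mpr h0.ne
        rw [show q - 1 = q - 2 + 1 by ring, Real.rpow_add_one hne (q-2), habs]
        ring
    have hgq : Integrable (fun y => |u y| ^ (q-1)) μ := by
      refine (hg.abs).congr ?_
      filter_upwards with y
      exact abs_g hq (u y)
    have hstep5 : (a/2) ^ (q-1) * mSc ≤ ∫ y in S ∩ t, |u y| ^ (q-1) ∂μ := by
      rw [setIntegral_congr_fun (hS.inter ht) habs_eq, integral_neg]
      linarith
    -- now the lintegral chain
    have hptwise : ∀ y ∈ S ∩ t,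
        ENNReal.ofReal (a ^ (p-q+1) * |u y| ^ (q-1)) ≤ ENNReal.ofReal (|a - u y| ^ p) := by
      intro y hy
      have hy0 : u y ≤ 0 := hy.2
      have hb : 0 < a - u y := by linarith
      have hba : a ≤ a - u y := by linarith
      have hbu : |u y| ≤ a - u y := by
        rw [abs_of_nonpos hy0]; linarith
      have h1 : |a - u y| ^ p = (a - u y) ^ (p-q+1) * (a - u y) ^ (q-1) := by
        rw [abs_of_pos hb, ← Real.rpow_add hb, show p - q + 1 + (q-1) = p by ring]
      refine ENNReal.ofReal_le_ofReal ?_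
      rw [h1]
      have e1 : a ^ (p-q+1) ≤ (a - u y) ^ (p-q+1) :=
        Real.rpow_le_rpow ha.le hba (by linarith)
      have e2 : |u y| ^ (q-1) ≤ (a - u y) ^ (q-1) :=
        Real.rpow_le_rpow (abs_nonneg _) hbu (by linarith)
      exact mul_le_mul e1 e2 (Real.rpow_nonneg (abs_nonneg _) _)
        (Real.rpow_nonneg hb.le _)
    have hqmeas : Measurable (fun y => ENNReal.ofReal (|u y| ^ (q-1))) :=
      (hu.abs.pow measurable_const).ennreal_ofReal
    have hchain : ENNReal.ofReal (a ^ (p-q+1)) * ENNReal.ofReal ((a/2) ^ (q-1) * mSc)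
        ≤ ∫⁻ y, ENNReal.ofReal (|a - u y| ^ p) ∂μ := by
      calc ENNReal.ofReal (a ^ (p-q+1)) * ENNReal.ofReal ((a/2) ^ (q-1) * mSc)
          ≤ ENNReal.ofReal (a ^ (p-q+1)) *
            ENNReal.ofReal (∫ y in S ∩ t, |u y| ^ (q-1) ∂μ) :=
            mul_le_mul_right (ENNReal.ofReal_le_ofReal hstep5) _
        _ = ENNReal.ofReal (a ^ (p-q+1)) *
            ∫⁻ y in S ∩ t, ENNReal.ofReal (|u y| ^ (q-1)) ∂μ := by
            rw [ofReal_integral_eq_lintegral_ofReal hgq.integrableOn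
              (Filter.Eventually.of_forall fun y => Real.rpow_nonneg (abs_nonneg _) _)]
        _ = ∫⁻ y in S ∩ t, ENNReal.ofReal (a ^ (p-q+1)) *
              ENNReal.ofReal (|u y| ^ (q-1)) ∂μ := by
            rw [lintegral_const_mul _ hqmeas]
        _ = ∫⁻ y in S ∩ t, ENNReal.ofReal (a ^ (p-q+1) * |u y| ^ (q-1)) ∂μ := by
            refine lintegral_congr fun y => ?_
            rw [ENNReal.ofReal_mul (Real.rpow_nonneg ha.le _)]
        _ ≤ ∫⁻ y in S ∩ t, ENNReal.ofReal (|a - u y| ^ p) ∂μ :=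
            setLIntegral_mono hfmeas hptwise
        _ ≤ ∫⁻ y, ENNReal.ofReal (|a - u y| ^ p) ∂μ := setLIntegral_le_lintegral _ _
    refine le_trans ?_ hchain
    -- final real comparison
    rw [← ENNReal.ofReal_mul (Real.rpow_nonneg ha.le _),
      show μ Set.univ = ENNReal.ofReal m from (ENNReal.ofReal_toReal hμu).symm,
      ← ENNReal.ofReal_mul (by positivity)]
    refine ENNReal.ofReal_le_ofReal ?_
    have hF1 : a ^ (p-q+1) * (a/2) ^ (q-1) = a ^ p / (2:ℝ) ^ (q-1) := by
      rw [Real.div_rpow ha.le (by norm_num : (0:ℝ) ≤ 2), ← mul_div_assoc,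
        ← Real.rpow_add ha, show p - q + 1 + (q-1) = p by ring]
    have hF2 : (2:ℝ) ^ (-(p+1)) ≤ (2:ℝ) ^ (-q) :=
      Real.rpow_le_rpow_of_exponent_le one_le_two (by linarith)
    have hF3 : (2:ℝ) ^ (-q) = ((2:ℝ) ^ q)⁻¹ := by
      rw [Real.rpow_neg (by norm_num : (0:ℝ) ≤ 2)]
    have hF4 : (2:ℝ) ^ q = (2:ℝ) ^ (q-1) * 2 := by
      rw [← Real.rpow_add_one (by norm_num : (2:ℝ) ≠ 0) (q-1),
        show q - 1 + 1 = q by ring]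
    have h2q1 : (0:ℝ) < (2:ℝ) ^ (q-1) := Real.rpow_pos_of_pos (by norm_num) _
    have hap : (0:ℝ) < a ^ p := Real.rpow_pos_of_pos ha _
    have hm0 : (0:ℝ) ≤ m := ENNReal.toReal_nonneg
    calc (2:ℝ) ^ (-(p+1)) * a ^ p * m ≤ (2:ℝ) ^ (-q) * a ^ p * m := by
          rw [mul_assoc, mul_assoc]
          exact mul_le_mul_of_nonneg_right hF2 (mul_nonneg hap.le hm0)
      _ = (a ^ p / (2:ℝ) ^ (q-1)) * (m/2) := by
          rw [hF3, hF4]; field_simp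
      _ ≤ (a ^ p / (2:ℝ) ^ (q-1)) * mSc :=
          mul_le_mul_of_nonneg_left hmSc2 (by positivity)
      _ = a ^ (p-q+1) * ((a/2) ^ (q-1) * mSc) := by
          rw [← mul_assoc, hF1]



lemma keyA {α : Type*} [MeasurableSpace α] {μ : Measure α} [IsFiniteMeasure μ]
    {u : α → ℝ} (hu : Measurable u) {p q : ℝ} (hq : 1 < q) (hqp : q < p)
    (hg : Integrable (fun y => |u y| ^ (q-2) * u y) μ)
    (hint : (∫ y, |u y| ^ (q-2) * u y ∂μ) = 0)
    (a : ℝ) :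
    ENNReal.ofReal ((2:ℝ) ^ (-(p+1)) * |a| ^ p) * μ Set.univ
      ≤ ∫⁻ y, ENNReal.ofReal (|a - u y| ^ p) ∂μ := by
  have hp0 : (0:ℝ) < p := by linarith
  rcases lt_trichotomy a 0 with ha | ha | ha
  · -- a < 0 : apply to -u and -a
    have hgeq : (fun y => |(-u y)| ^ (q-2) * (-u y)) = fun y => -(|u y| ^ (q-2) * u y) := by
      funext y; rw [abs_neg]; ring
    have hg' : Integrable (fun y => |(-u y)| ^ (q-2) * (-u y)) μ := by
      rw [hgeq]; exact hg.neg
    have hint' : (∫ y, |(-u y)| ^ (q-2) * (-u y) ∂μ) = 0 := by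
      rw [hgeq, integral_neg, hint, neg_zero]
    have h := keyA_pos hu.neg hq hqp hg' hint' (a := -a) (by linarith)
    have e2 : |a| = -a := abs_of_neg ha
    have e3 : (∫⁻ y, ENNReal.ofReal (|-a - (-u y)| ^ p) ∂μ)
        = ∫⁻ y, ENNReal.ofReal (|a - u y| ^ p) ∂μ := by
      refine lintegral_congr fun y => ?_
      rw [show -a - (-u y) = -(a - u y) by ring, abs_neg]
    rw [e2]
    have h := h.trans_eq e3
    exact h
  · simp [ha, Real.zero_rpow hp0.ne']
  · have h := keyA_pos hu hq hqp hg hint (a := a) ha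
    rwa [abs_of_pos ha]





lemma keyB {N : ℕ} {Ω : Set (Euc N)} (hΩm : MeasurableSet Ω) (hfin : volume Ω ≠ ⊤)
    {u : Euc N → ℝ} (hu : Measurable u) {p q : ℝ} (hq : 1 < q) (hqp : q < p)
    (hg : Integrable (fun y => |u y| ^ (q-2) * u y) (volume.restrict Ω))
    (hint : (∫ y in Ω, |u y| ^ (q-2) * u y) = 0) :
    ENNReal.ofReal ((2:ℝ) ^ (-(p+1))) * (volume Ω * ∫⁻ x in Ω, ENNReal.ofReal (|u x| ^ p))
      ≤ ∫⁻ z in Ω ×ˢ Ω, ENNReal.ofReal (|u z.1 - u z.2| ^ p) := by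
  set μ := volume.restrict Ω with hμdef
  haveI : IsFiniteMeasure μ := ⟨by rw [Measure.restrict_apply_univ]; exact hfin.lt_top⟩
  have hV : μ Set.univ = volume Ω := Measure.restrict_apply_univ _
  have h1 : ∀ x : Euc N,
      ENNReal.ofReal ((2:ℝ) ^ (-(p+1)) * |u x| ^ p) * μ Set.univ
        ≤ ∫⁻ y, ENNReal.ofReal (|u x - u y| ^ p) ∂μ :=
    fun x => keyA hu hq hqp hg hint (u x)
  have hmono : ∫⁻ x, ENNReal.ofReal ((2:ℝ) ^ (-(p+1)) * |u x| ^ p) * μ Set.univ ∂μ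
      ≤ ∫⁻ x, (∫⁻ y, ENNReal.ofReal (|u x - u y| ^ p) ∂μ) ∂μ :=
    lintegral_mono fun x => h1 x
  have hL : ∫⁻ x, ENNReal.ofReal ((2:ℝ) ^ (-(p+1)) * |u x| ^ p) * μ Set.univ ∂μ
      = ENNReal.ofReal ((2:ℝ) ^ (-(p+1))) * (volume Ω * ∫⁻ x, ENNReal.ofReal (|u x| ^ p) ∂μ) := by
    have e : (fun x => ENNReal.ofReal ((2:ℝ) ^ (-(p+1)) * |u x| ^ p) * μ Set.univ)
        = fun x => (ENNReal.ofReal ((2:ℝ) ^ (-(p+1))) * volume Ω) *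
            ENNReal.ofReal (|u x| ^ p) := by
      funext x
      rw [ENNReal.ofReal_mul (Real.rpow_nonneg (by norm_num) _), hV]
      ring
    rw [e, lintegral_const_mul _ ((hu.abs.pow measurable_const).ennreal_ofReal),
      mul_assoc]
  have hR : ∫⁻ x, (∫⁻ y, ENNReal.ofReal (|u x - u y| ^ p) ∂μ) ∂μ
      = ∫⁻ z in Ω ×ˢ Ω, ENNReal.ofReal (|u z.1 - u z.2| ^ p) := by
    have hK : AEMeasurable (Function.uncurry
        (fun x y => ENNReal.ofReal (|u x - u y| ^ p))) (μ.prod μ) := by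
      apply Measurable.aemeasurable
      exact (((hu.comp measurable_fst).sub (hu.comp measurable_snd)).abs.pow
        measurable_const).ennreal_ofReal
    rw [lintegral_lintegral hK, hμdef, Measure.prod_restrict]
    rfl
  rw [← hL, ← hR] at *
  exact hmono

lemma keyC {N : ℕ} {Ω : Set (Euc N)} {u : Euc N → ℝ} (hu : Measurable u)
    {s t D : ℝ} (ht : 0 < t) (hc : 0 < (N:ℝ) + s * t)
    (hD : ∀ x ∈ Ω, ∀ y ∈ Ω, ‖x - y‖ ≤ D) (hD1 : 1 ≤ D) :
    ∫⁻ z in Ω ×ˢ Ω, ENNReal.ofReal (|u z.1 - u z.2| ^ t)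
      ≤ ENNReal.ofReal (D ^ ((N:ℝ) + s * t)) * gagliardo Ω s t u := by
  set c := (N:ℝ) + s * t with hcdef
  have hD0 : (0:ℝ) < D := by linarith
  have hfmeas : Measurable (fun z : Euc N × Euc N =>
      ENNReal.ofReal (D ^ c) * ENNReal.ofReal (|u z.1 - u z.2| ^ t / ‖z.1 - z.2‖ ^ c)) :=
    measurable_const.mul
      ((((hu.comp measurable_fst).sub (hu.comp measurable_snd)).abs.pow
        measurable_const).div
        (((measurable_fst.sub measurable_snd).norm).pow measurable_const)).ennreal_ofReal
  calc ∫⁻ z in Ω ×ˢ Ω, ENNReal.ofReal (|u z.1 - u z.2| ^ t)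
      ≤ ∫⁻ z in Ω ×ˢ Ω, ENNReal.ofReal (D ^ c) *
          ENNReal.ofReal (|u z.1 - u z.2| ^ t / ‖z.1 - z.2‖ ^ c) := by
        refine setLIntegral_mono hfmeas ?_
        rintro ⟨x, y⟩ hz
        have hx : x ∈ Ω := hz.1
        have hy : y ∈ Ω := hz.2
        simp only
        rcases eq_or_ne x y with hxy | hxy
        · rw [hxy, sub_self, abs_zero, Real.zero_rpow ht.ne', ENNReal.ofReal_zero]
          exact zero_le
        · have hnorm : (0:ℝ) < ‖x - y‖ := by
            rw [norm_pos_iff]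
            exact sub_ne_zero.mpr hxy
          have hB : (0:ℝ) < ‖x - y‖ ^ c := Real.rpow_pos_of_pos hnorm c
          have hBD : ‖x - y‖ ^ c ≤ D ^ c :=
            Real.rpow_le_rpow hnorm.le (hD x hx y hy) hc.le
          rw [← ENNReal.ofReal_mul (Real.rpow_nonneg hD0.le _)]
          refine ENNReal.ofReal_le_ofReal ?_
          have hdivnn : 0 ≤ |u x - u y| ^ t / ‖x - y‖ ^ c :=
            div_nonneg (Real.rpow_nonneg (abs_nonneg _) _) hB.le
          calc |u x - u y| ^ t
              = (|u x - u y| ^ t / ‖x - y‖ ^ c) * ‖x - y‖ ^ c :=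
                (div_mul_cancel₀ _ hB.ne').symm
            _ ≤ (|u x - u y| ^ t / ‖x - y‖ ^ c) * D ^ c :=
                mul_le_mul_of_nonneg_left hBD hdivnn
            _ = D ^ c * (|u x - u y| ^ t / ‖x - y‖ ^ c) := mul_comm _ _
    _ = ENNReal.ofReal (D ^ c) *
        ∫⁻ z in Ω ×ˢ Ω, ENNReal.ofReal (|u z.1 - u z.2| ^ t / ‖z.1 - z.2‖ ^ c) := by
        have hm2 : Measurable (fun z : Euc N × Euc N =>
            ENNReal.ofReal (|u z.1 - u z.2| ^ t / ‖z.1 - z.2‖ ^ c)) := by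
          apply Measurable.ennreal_ofReal
          exact (((hu.comp measurable_fst).sub (hu.comp measurable_snd)).abs.pow
            measurable_const).div
            (((measurable_fst.sub measurable_snd).norm).pow measurable_const)
        rw [lintegral_const_mul _ hm2]
    _ ≤ ENNReal.ofReal (D ^ c) * gagliardo Ω s t u := by
        refine mul_le_mul_right ?_ _
        refine lintegral_mono_set ?_
        rintro ⟨x, y⟩ hz
        exact Or.inl hz.1

lemma memX_int {N : ℕ} {Ω : Set (Euc N)} {s r : ℝ} {u : Euc N → ℝ}
    (h : memX Ω s r u) :
    Integrable (fun x => |u x| ^ r) (volume.restrict Ω) ∧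
      (∫ x in Ω, |u x| ^ r) = (∫⁻ x in Ω, ENNReal.ofReal (|u x| ^ r)).toReal := by
  have hmeas : Measurable fun x => |u x| ^ r := h.1.abs.pow measurable_const
  have hnn : 0 ≤ᵐ[volume.restrict Ω] fun x => |u x| ^ r :=
    Filter.Eventually.of_forall fun x => Real.rpow_nonneg (abs_nonneg _) _
  have hfin : (∫⁻ x in Ω, ENNReal.ofReal (|u x| ^ r)) < ⊤ :=
    lt_of_le_of_lt le_self_add h.2
  exact ⟨⟨hmeas.aestronglyMeasurable, (hasFiniteIntegral_iff_ofReal hnn).mpr hfin⟩,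
    integral_eq_lintegral_of_nonneg_ae hnn hmeas.aestronglyMeasurable⟩

set_option maxHeartbeats 2000000 in
/-- Lemma 3.2, coercivity. For `0 < s₂ < s₁ < 1`, `1 < q < p < ∞` and
`λ > 0`, the functional `F_λ` is coercive on `𝒞` with respect to `‖·‖_{s₁,p}`. -/
theorem stmt_10 (N : ℕ) (hN : 2 ≤ N) (Ω : Set (Euc N)) (hΩne : Ω.Nonempty)
    (hΩo : IsOpen Ω) (hΩb : Bornology.IsBounded Ω) (s₁ s₂ p q : ℝ)
    (hs₂0 : 0 < s₂) (hss : s₂ < s₁) (hs₁1 : s₁ < 1) (hq : 1 < q) (hqp : q < p)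
    (lam : ℝ) (hlam : 0 < lam) :
    ∀ M : ℝ, ∃ R : ℝ, 0 < R ∧ ∀ u : Euc N → ℝ,
      memX Ω s₁ p u → memX Ω s₂ q u → (∫ x in Ω, |u x| ^ (q - 2) * u x) = 0 →
      R ≤ normX Ω s₁ p u → M ≤ Ffun Ω s₁ s₂ p q lam u := by
  intro M
  have hp1 : 1 < p := hq.trans hqp
  have hp0 : (0:ℝ) < p := by linarith
  have hq0 : (0:ℝ) < q := by linarith
  have hs₁0 : 0 < s₁ := hs₂0.trans hss
  have hΩm : MeasurableSet Ω := hΩo.measurableSet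
  have hvolpos : 0 < volume Ω := hΩo.measure_pos volume hΩne
  have hvolfin : volume Ω ≠ ⊤ := hΩb.measure_lt_top.ne
  set m : ℝ := (volume Ω).toReal with hmdef
  have hm : 0 < m := ENNReal.toReal_pos hvolpos.ne' hvolfin
  obtain ⟨ρ, hρ⟩ := hΩb.subset_closedBall 0
  set D : ℝ := max 1 (2*ρ) with hDdef
  have hD1 : (1:ℝ) ≤ D := le_max_left _ _
  have hD0 : (0:ℝ) < D := by linarith
  have hD : ∀ x ∈ Ω, ∀ y ∈ Ω, ‖x - y‖ ≤ D := by
    intro x hx y hy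
    have hx' : ‖x‖ ≤ ρ := by
      have := hρ hx
      rwa [Metric.mem_closedBall, dist_zero_right] at this
    have hy' : ‖y‖ ≤ ρ := by
      have := hρ hy
      rwa [Metric.mem_closedBall, dist_zero_right] at this
    calc ‖x - y‖ ≤ ‖x‖ + ‖y‖ := norm_sub_le _ _
      _ ≤ 2*ρ := by linarith
      _ ≤ D := le_max_right _ _
  set c : ℝ := (N:ℝ) + s₁ * p with hcdef
  have hc : 0 < c := by positivity
  have hDc : (0:ℝ) < D ^ c := Real.rpow_pos_of_pos hD0 c
  set K₁ : ℝ := (2:ℝ) ^ (p+1) * D ^ c / m with hK₁def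
  have h2P : (0:ℝ) < (2:ℝ) ^ (p+1) := Real.rpow_pos_of_pos two_pos _
  have hK₁ : 0 < K₁ := by positivity
  set ε : ℝ := q / (lam * K₁ * (2*p)) with hεdef
  have hε : 0 < ε := by positivity
  set Cε : ℝ := (ε ^ (-(1:ℝ)/(p-q))) ^ q with hCεdef
  have hCε0 : 0 < Cε := by positivity
  set B : ℝ := lam / q * (Cε * m) with hBdef
  set T : ℝ := max 1 ((2*p) * (|M| + |B| + 1) * (K₁ + 1)) with hTdef
  have hT1 : (1:ℝ) ≤ T := le_max_left _ _
  have hT0 : (0:ℝ) < T := by linarith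
  refine ⟨T ^ ((1:ℝ)/p), Real.rpow_pos_of_pos hT0 _, ?_⟩
  intro u hu1 hu2 hcon hR
  have hum : Measurable u := hu1.1
  obtain ⟨hIp, hIpeq⟩ := memX_int hu1
  obtain ⟨hIq, hIqeq⟩ := memX_int hu2
  haveI : IsFiniteMeasure (volume.restrict Ω) :=
    ⟨by rw [Measure.restrict_apply_univ]; exact hvolfin.lt_top⟩
  have hg : Integrable (fun y => |u y| ^ (q-2) * u y) (volume.restrict Ω) :=
    int_g hq hum hIq
  have hcon' : (∫ x in Ω, |u x| ^ (q-2) * u x) = 0 := by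
    rw [show q - 2 = q - 2 by ring]
    exact hcon
  have h0 : ENNReal.ofReal ((2:ℝ) ^ (-(p+1))) *
      (volume Ω * ∫⁻ x in Ω, ENNReal.ofReal (|u x| ^ p))
      ≤ ENNReal.ofReal (D ^ c) * gagliardo Ω s₁ p u :=
    (keyB hΩm hvolfin hum hq hqp hg hcon').trans (keyC hum hp0 hc hD hD1)
  have hIpfin : (∫⁻ x in Ω, ENNReal.ofReal (|u x| ^ p)) ≠ ⊤ :=
    (lt_of_le_of_lt le_self_add hu1.2).ne
  have hG1fin : gagliardo Ω s₁ p u ≠ ⊤ :=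
    (lt_of_le_of_lt le_add_self hu1.2).ne
  have hLfin : ENNReal.ofReal ((2:ℝ) ^ (-(p+1))) *
      (volume Ω * ∫⁻ x in Ω, ENNReal.ofReal (|u x| ^ p)) ≠ ⊤ :=
    ENNReal.mul_ne_top ENNReal.ofReal_ne_top (ENNReal.mul_ne_top hvolfin hIpfin)
  have hRfin : ENNReal.ofReal (D ^ c) * gagliardo Ω s₁ p u ≠ ⊤ :=
    ENNReal.mul_ne_top ENNReal.ofReal_ne_top hG1fin
  have hreal := (ENNReal.toReal_le_toReal hLfin hRfin).mpr h0
  rw [ENNReal.toReal_mul, ENNReal.toReal_mul, ENNReal.toReal_mul,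
    ENNReal.toReal_ofReal (Real.rpow_nonneg (by norm_num : (0:ℝ) ≤ 2) _),
    ENNReal.toReal_ofReal hDc.le, ← hIpeq, ← hmdef] at hreal
  have hS₁def : semiPow Ω s₁ p u = (gagliardo Ω s₁ p u).toReal := rfl
  rw [← hS₁def] at hreal
  -- hreal : 2^(-(p+1)) * (m * ∫|u|^p) ≤ D^c * semiPow Ω s₁ p u
  have hS₁0 : 0 ≤ semiPow Ω s₁ p u := ENNReal.toReal_nonneg
  have hS₂0 : 0 ≤ semiPow Ω s₂ q u := ENNReal.toReal_nonneg
  have hA0 : 0 ≤ ∫ x in Ω, |u x| ^ p :=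
    integral_nonneg fun x => Real.rpow_nonneg (abs_nonneg _) _
  -- Poincaré in real form
  have hAK : (∫ x in Ω, |u x| ^ p) ≤ K₁ * semiPow Ω s₁ p u := by
    have hneg : (2:ℝ) ^ (-(p+1)) = ((2:ℝ) ^ (p+1))⁻¹ := by
      rw [Real.rpow_neg (by norm_num : (0:ℝ) ≤ 2)]
    rw [hneg] at hreal
    have h2 := mul_le_mul_of_nonneg_left hreal h2P.le
    rw [← mul_assoc, mul_inv_cancel₀ h2P.ne', one_mul] at h2
    rw [hK₁def, div_mul_eq_mul_div, le_div_iff₀ hm]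
    calc (∫ x in Ω, |u x| ^ p) * m = m * ∫ x in Ω, |u x| ^ p := mul_comm _ _
      _ ≤ (2:ℝ) ^ (p+1) * (D ^ c * semiPow Ω s₁ p u) := h2
      _ = (2:ℝ) ^ (p+1) * D ^ c * semiPow Ω s₁ p u := by ring
  -- Young inequality
  have hYoung : (∫ x in Ω, |u x| ^ q) ≤ ε * (∫ x in Ω, |u x| ^ p) + Cε * m := by
    have hint2 : Integrable (fun x => ε * |u x| ^ p + Cε) (volume.restrict Ω) :=
      (hIp.const_mul ε).add (integrable_const _)
    have hY : (∫ x in Ω, |u x| ^ q) ≤ ∫ x in Ω, (ε * |u x| ^ p + Cε) :=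
      integral_mono hIq hint2 fun x => young_pt hq0 hqp hε (abs_nonneg _)
    have hYe : (∫ x in Ω, (ε * |u x| ^ p + Cε)) =
        ε * (∫ x in Ω, |u x| ^ p) + Cε * m := by
      rw [integral_add (hIp.const_mul ε) (integrable_const _), integral_const_mul,
        setIntegral_const, smul_eq_mul, Measure.real, hmdef]
      ring
    linarith
  -- norm identity
  have hnormp : (normX Ω s₁ p u) ^ p = (∫ x in Ω, |u x| ^ p) + semiPow Ω s₁ p u := by
    rw [normX, ← Real.rpow_mul (by linarith), one_div_mul_cancel hp0.ne',
      Real.rpow_one]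
  have hRp : T ≤ (normX Ω s₁ p u) ^ p := by
    have h1 : (T ^ ((1:ℝ)/p)) ^ p = T := by
      rw [← Real.rpow_mul hT0.le, one_div_mul_cancel hp0.ne', Real.rpow_one]
    calc T = (T ^ ((1:ℝ)/p)) ^ p := h1.symm
      _ ≤ (normX Ω s₁ p u) ^ p :=
        Real.rpow_le_rpow (Real.rpow_nonneg hT0.le _) hR hp0.le
  -- lower bound on the seminorm
  have h7 : T ≤ (K₁ + 1) * semiPow Ω s₁ p u := by
    have hexp : (K₁ + 1) * semiPow Ω s₁ p u = K₁ * semiPow Ω s₁ p u + semiPow Ω s₁ p u := by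
      ring
    rw [hnormp] at hRp
    linarith
  have h8 : (2*p) * (|M| + |B| + 1) * (K₁ + 1) ≤ T := le_max_right _ _
  have h9 : (2*p) * (|M| + |B| + 1) ≤ semiPow Ω s₁ p u := by
    nlinarith [hK₁]
  have h10 : |M| + |B| + 1 ≤ 1/(2*p) * semiPow Ω s₁ p u := by
    have hc2 : (1:ℝ)/(2*p) * (2*p) = 1 := by field_simp
    have h11 := mul_le_mul_of_nonneg_left h9 (by positivity : (0:ℝ) ≤ 1/(2*p))
    rw [← mul_assoc, hc2, one_mul] at h11
    exact h11
  -- key constant identity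
  have e1 : lam / q * (ε * K₁) = 1/(2*p) := by
    rw [hεdef]
    field_simp [hlam.ne', hq0.ne', hK₁.ne', hp0.ne']
  have h5a : (∫ x in Ω, |u x| ^ q) ≤ ε * (K₁ * semiPow Ω s₁ p u) + Cε * m := by
    have := mul_le_mul_of_nonneg_left hAK hε.le
    linarith [this, hYoung]
  have h5 : lam / q * (∫ x in Ω, |u x| ^ q) ≤ 1/(2*p) * semiPow Ω s₁ p u + B := by
    have h5b := mul_le_mul_of_nonneg_left h5a (by positivity : (0:ℝ) ≤ lam / q)
    have h5c : lam / q * (ε * (K₁ * semiPow Ω s₁ p u) + Cε * m)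
        = (lam / q * (ε * K₁)) * semiPow Ω s₁ p u + lam / q * (Cε * m) := by ring
    rw [h5c, e1, ← hBdef] at h5b
    exact h5b
  have hp' : (1:ℝ)/p = 1/(2*p) + 1/(2*p) := by
    field_simp
    ring
  have hS2' : 0 ≤ 1/q * semiPow Ω s₂ q u := by positivity
  have hsplitp : 1/p * semiPow Ω s₁ p u
      = 1/(2*p) * semiPow Ω s₁ p u + 1/(2*p) * semiPow Ω s₁ p u := by
    rw [hp']; ring
  rw [Ffun]
  have hMabs : M ≤ |M| := le_abs_self M
  have hBabs : B ≤ |B| := le_abs_self B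
  linarith
end
end

section
/- Let s₁, s₂ ∈ (0,1), p, q ∈ (1,∞), and let u : ℝ^N → ℝ be measurable with M := ess sup_Ω |u| < ∞. Let x ∈ ℝ^N ∖ closure(Ω) be such that the functions y ↦ |u(x) − u(y)|^{p−2} (u(x) − u(y)) / |x − y|^{N + p s₁} and y ↦ |u(x) − u(y)|^{q−2} (u(x) − u(y)) / |x − y|^{N + q s₂} are integrable over Ω and the sum of their integrals over Ω equals 0 (i.e., the homogeneous nonlocal (p,q)-Neumann condition 𝒩_{p,s₁} u (x) + 𝒩_{q,s₂} u (x) = 0 holds at x). Then |u(x)| ≤ M. In particular, any function satisfying this condition at almost every x ∈ ℝ^N ∖ closure(Ω) and essentially bounded on Ω satisfies ess sup_{ℝ^N} |u| ≤ 2 ess sup_Ω |u|, as asserted in Theorem 1.3. -/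
open MeasureTheory Filter Topology
open scoped ENNReal

noncomputable section

/-- The integrand of the nonlocal normal `r`-derivative `𝒩_{r,s} u(x)`:
`y ↦ |u(x) - u(y)|^{r-2} (u(x) - u(y)) / |x - y|^{N + r s}`. -/
def neumannKernel {N : ℕ} (r s : ℝ) (u : Euc N → ℝ) (x y : Euc N) : ℝ :=
  |u x - u y| ^ (r - 2) * (u x - u y) / ‖x - y‖ ^ ((N : ℝ) + r * s)

lemma kernel_lb {N : ℕ} (r s : ℝ) (hr : 1 < r) (hα : 0 ≤ (N : ℝ) + r * s)
    (u : Euc N → ℝ) (x y : Euc N) (R M : ℝ)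
    (hy : |u y| ≤ M) (hxy : x ≠ y) (hR : ‖x - y‖ ≤ R) (hMx : M < u x) :
    (u x - M) ^ (r - 1) / R ^ ((N : ℝ) + r * s) ≤ neumannKernel r s u x y := by
  have hεt : u x - M ≤ u x - u y := by have := (abs_le.mp hy).2; linarith
  have hε : (0:ℝ) < u x - M := by linarith
  have htpos : (0:ℝ) < u x - u y := lt_of_lt_of_le hε hεt
  have hd : 0 < ‖x - y‖ := by
    simpa [norm_sub_pos_iff] using sub_ne_zero.mpr hxy
  have hnum : |u x - u y| ^ (r - 2) * (u x - u y) = (u x - u y) ^ (r - 1) := by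
    rw [abs_of_pos htpos]
    calc (u x - u y) ^ (r - 2) * (u x - u y)
        = (u x - u y) ^ (r - 2) * (u x - u y) ^ (1:ℝ) := by rw [Real.rpow_one]
      _ = (u x - u y) ^ (r - 2 + 1) := (Real.rpow_add htpos _ _).symm
      _ = (u x - u y) ^ (r - 1) := by ring_nf
  unfold neumannKernel
  rw [hnum]
  exact div_le_div₀ (Real.rpow_nonneg htpos.le _)
    (Real.rpow_le_rpow hε.le hεt (by linarith))
    (Real.rpow_pos_of_pos hd _)
    (Real.rpow_le_rpow (norm_nonneg _) hR hα)

lemma integral_kernel_pos {N : ℕ} (Ω : Set (Euc N)) (hΩne : Ω.Nonempty) (hΩo : IsOpen Ω)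
    (hΩb : Bornology.IsBounded Ω) (r s : ℝ) (hr : 1 < r) (hα : 0 ≤ (N : ℝ) + r * s)
    (u : Euc N → ℝ) (M : ℝ) (hbd : ∀ᵐ y ∂(volume.restrict Ω), |u y| ≤ M)
    (x : Euc N) (hx : x ∉ closure Ω)
    (hint : IntegrableOn (neumannKernel r s u x) Ω volume)
    (hMx : M < u x) :
    0 < ∫ y in Ω, neumannKernel r s u x y := by
  obtain ⟨R₀, hR₀⟩ := hΩb.subset_closedBall x
  set R := max R₀ 1 with hRdef
  have hR1 : (0:ℝ) < R := lt_of_lt_of_le one_pos (le_max_right _ _)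
  set c := (u x - M) ^ (r - 1) / R ^ ((N : ℝ) + r * s) with hc
  have hcpos : 0 < c :=
    div_pos (Real.rpow_pos_of_pos (by linarith) _) (Real.rpow_pos_of_pos hR1 _)
  have hμ : 0 < volume Ω := hΩo.measure_pos volume hΩne
  have hμfin : volume Ω < ⊤ := hΩb.measure_lt_top
  have hle : ∀ᵐ y ∂(volume.restrict Ω), c ≤ neumannKernel r s u x y := by
    filter_upwards [hbd, ae_restrict_mem hΩo.measurableSet] with y hy hyΩ
    have hxy : x ≠ y := fun h => hx (h ▸ subset_closure hyΩ)
    have hRy : ‖x - y‖ ≤ R := by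
      have h1 : dist y x ≤ R₀ := Metric.mem_closedBall.mp (hR₀ hyΩ)
      calc ‖x - y‖ = dist x y := (dist_eq_norm x y).symm
        _ = dist y x := dist_comm _ _
        _ ≤ R₀ := h1
        _ ≤ R := le_max_left _ _
    exact kernel_lb r s hr hα u x y R M hy hxy hRy hMx
  have hconst : IntegrableOn (fun _ : Euc N => c) Ω volume :=
    integrableOn_const hμfin.ne
  have h1 : ∫ y in Ω, (fun _ : Euc N => c) y ≤ ∫ y in Ω, neumannKernel r s u x y :=
    integral_mono_ae hconst hint hle
  have h2 : ∫ y in Ω, (fun _ : Euc N => c) y = (volume Ω).toReal * c := by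
    rw [setIntegral_const, smul_eq_mul]
    rfl
  have h3 : 0 < (volume Ω).toReal * c :=
    mul_pos (ENNReal.toReal_pos hμ.ne' hμfin.ne) hcpos
  rw [h2] at h1
  linarith

lemma kernel_neg {N : ℕ} (r s : ℝ) (u : Euc N → ℝ) (x y : Euc N) :
    neumannKernel r s (fun z => -u z) x y = - neumannKernel r s u x y := by
  unfold neumannKernel
  rw [show -u x - -u y = -(u x - u y) by ring, abs_neg]
  ring

lemma point_bound {N : ℕ} (Ω : Set (Euc N)) (hΩne : Ω.Nonempty) (hΩo : IsOpen Ω)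
    (hΩb : Bornology.IsBounded Ω) (s₁ s₂ p q : ℝ)
    (hs₁0 : 0 < s₁) (hs₂0 : 0 < s₂) (hp : 1 < p) (hq : 1 < q)
    (u : Euc N → ℝ) (M : ℝ)
    (hbd : ∀ᵐ y ∂(volume.restrict Ω), |u y| ≤ M)
    (x : Euc N) (hx : x ∉ closure Ω)
    (hint1 : IntegrableOn (neumannKernel p s₁ u x) Ω volume)
    (hint2 : IntegrableOn (neumannKernel q s₂ u x) Ω volume)
    (hsum : (∫ y in Ω, neumannKernel p s₁ u x y) + (∫ y in Ω, neumannKernel q s₂ u x y) = 0) :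
    |u x| ≤ M := by
  have hα1 : 0 ≤ (N : ℝ) + p * s₁ :=
    add_nonneg (Nat.cast_nonneg N) (le_of_lt (mul_pos (by linarith) hs₁0))
  have hα2 : 0 ≤ (N : ℝ) + q * s₂ :=
    add_nonneg (Nat.cast_nonneg N) (le_of_lt (mul_pos (by linarith) hs₂0))
  by_contra hcon
  push_neg at hcon
  rcases lt_or_ge M (u x) with hMx | hMx
  · -- case u x > M
    have hp1 := integral_kernel_pos Ω hΩne hΩo hΩb p s₁ hp hα1 u M hbd x hx hint1 hMx
    have hq1 := integral_kernel_pos Ω hΩne hΩo hΩb q s₂ hq hα2 u M hbd x hx hint2 hMx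
    linarith
  · -- then u x < -M; apply to -u
    have hMx' : M < -u x := by
      rcases abs_cases (u x) with ⟨h, _⟩ | ⟨h, _⟩ <;> [skip; linarith]
      rw [h] at hcon; linarith
    set v : Euc N → ℝ := fun z => -u z with hv
    have hbd' : ∀ᵐ y ∂(volume.restrict Ω), |v y| ≤ M := by
      filter_upwards [hbd] with y hy
      simpa [hv, abs_neg] using hy
    have heq1 : neumannKernel p s₁ v x = fun y => - neumannKernel p s₁ u x y :=
      funext fun y => kernel_neg p s₁ u x y
    have heq2 : neumannKernel q s₂ v x = fun y => - neumannKernel q s₂ u x y :=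
      funext fun y => kernel_neg q s₂ u x y
    have hint1' : IntegrableOn (neumannKernel p s₁ v x) Ω volume := by
      rw [heq1]; exact hint1.neg
    have hint2' : IntegrableOn (neumannKernel q s₂ v x) Ω volume := by
      rw [heq2]; exact hint2.neg
    have hvx : M < v x := hMx'
    have hp1 := integral_kernel_pos Ω hΩne hΩo hΩb p s₁ hp hα1 v M hbd' x hx hint1' hvx
    have hq1 := integral_kernel_pos Ω hΩne hΩo hΩb q s₂ hq hα2 v M hbd' x hx hint2' hvx
    rw [heq1] at hp1
    rw [heq2] at hq1
    rw [integral_neg] at hp1 hq1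
    linarith

/-- exterior bound, Theorem 1.3. If `|u| ≤ M` a.e. on `Ω` and at a
point `x ∉ closure Ω` the homogeneous nonlocal `(p,q)`-Neumann condition
`𝒩_{p,s₁} u(x) + 𝒩_{q,s₂} u(x) = 0` holds (with both integrands integrable on `Ω`),
then `|u x| ≤ M`. In particular, if the boundary of `Ω` is Lebesgue-null and the Neumann
condition holds at a.e. `x ∉ closure Ω`, then `|u| ≤ 2 M` a.e. on `ℝ^N`, i.e.
`ess sup_{ℝ^N} |u| ≤ 2 ess sup_Ω |u|`. -/
theorem stmt_19 (N : ℕ) (hN : 2 ≤ N) (Ω : Set (Euc N)) (hΩne : Ω.Nonempty)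
    (hΩo : IsOpen Ω) (hΩb : Bornology.IsBounded Ω) (s₁ s₂ p q : ℝ)
    (hs₁0 : 0 < s₁) (hs₁1 : s₁ < 1) (hs₂0 : 0 < s₂) (hs₂1 : s₂ < 1)
    (hp : 1 < p) (hq : 1 < q) :
    (∀ (u : Euc N → ℝ) (M : ℝ), Measurable u →
      (∀ᵐ y ∂(volume.restrict Ω), |u y| ≤ M) →
      ∀ x : Euc N, x ∉ closure Ω →
        IntegrableOn (neumannKernel p s₁ u x) Ω volume →
        IntegrableOn (neumannKernel q s₂ u x) Ω volume →
        (∫ y in Ω, neumannKernel p s₁ u x y) + (∫ y in Ω, neumannKernel q s₂ u x y) = 0 →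
        |u x| ≤ M) ∧
    (volume (frontier Ω) = 0 →
      ∀ (u : Euc N → ℝ) (M : ℝ), Measurable u →
        (∀ᵐ y ∂(volume.restrict Ω), |u y| ≤ M) →
        (∀ᵐ x ∂(volume.restrict (closure Ω)ᶜ),
          IntegrableOn (neumannKernel p s₁ u x) Ω volume ∧
          IntegrableOn (neumannKernel q s₂ u x) Ω volume ∧
          (∫ y in Ω, neumannKernel p s₁ u x y) + (∫ y in Ω, neumannKernel q s₂ u x y) = 0) →
        ∀ᵐ x ∂(volume : Measure (Euc N)), |u x| ≤ 2 * M) := by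
  constructor
  · intro u M _ hbd x hx hint1 hint2 hsum
    exact point_bound Ω hΩne hΩo hΩb s₁ s₂ p q hs₁0 hs₂0 hp hq u M hbd x hx hint1 hint2 hsum
  · intro hfr u M _ hbd hae
    have hμ : 0 < volume Ω := hΩo.measure_pos volume hΩne
    have hres : volume.restrict Ω ≠ 0 := by
      intro h
      have h2 : volume Ω = 0 := by
        rw [← Measure.restrict_apply_univ Ω, h]; simp
      exact absurd h2 hμ.ne'
    have : (ae (volume.restrict Ω)).NeBot := ae_neBot.mpr hres
    obtain ⟨y₀, hy₀⟩ := hbd.exists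
    have hM0 : 0 ≤ M := (abs_nonneg _).trans hy₀
    have key : ∀ᵐ x ∂(volume.restrict (closure Ω)ᶜ), |u x| ≤ M := by
      filter_upwards [hae, ae_restrict_mem isClosed_closure.isOpen_compl.measurableSet]
        with x hx hxc
      exact point_bound Ω hΩne hΩo hΩb s₁ s₂ p q hs₁0 hs₂0 hp hq u M hbd x hxc
        hx.1 hx.2.1 hx.2.2
    have h1 := (ae_restrict_iff' hΩo.measurableSet).mp hbd
    have h2 := (ae_restrict_iff' isClosed_closure.isOpen_compl.measurableSet).mp key
    have h3 : ∀ᵐ x ∂(volume : Measure (Euc N)), x ∉ frontier Ω :=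
      measure_eq_zero_iff_ae_notMem.mp hfr
    filter_upwards [h1, h2, h3] with x hx1 hx2 hx3
    by_cases hxΩ : x ∈ Ω
    · have := hx1 hxΩ; linarith
    · by_cases hxc : x ∈ closure Ω
      · exact absurd (by rw [frontier, hΩo.interior_eq]; exact ⟨hxc, hxΩ⟩) hx3
      · have := hx2 hxc; linarith
end
end
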